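/- arXiv:1302.4235 — 10 statements merged into one kernel-verified Lean document; each statement's English description precedes it below -/
import Mathlib

section
/- Let K be a field, (a_k)_{k≥0} a sequence in K, and (b_k)_{k≥−1} a nondecreasing sequence of integers with b_{−1} = −1, b_0 = 0 and b_{k+2} − b_k ≥ 1 for all k ≥ −1. Suppose f = ∑_{n≥0} f_n x^n is a formal power series over K for which there exists a sequence of formal power series (F^{(k)})_{k≥0} with F^{(0)} = f and F^{(k)} · (1 − a_k x^{b_{k+1}−b_{k−1}} F^{(k+1)}) = 1 for all k ≥ 0. Let A_n(x), B_n(x) be the polynomials defined by A_0 = 0, A_1 = 1, B_0 = 1, B_1 = 1 and, for n ≥ 2, A_n = A_{n−1} − a_{n−2} x^{b_{n−1}−b_{n−3}} A_{n−2} and B_n = B_{n−1} − a_{n−2} x^{b_{n−1}−b_{n−3}} B_{n−2}. Then for every k ≥ 0, the coefficient of x^n in the power series B_k(x)·f(x) − A_k(x) is 0 for all n with b_{k−1} < n ≤ b_{k−1} + b_k, and the coefficient of x^{b_{k−1}+b_k+1} equals a_0 a_1 ⋯ a_{k−1}. -/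
/-!
Write `c k = a_k x^{m_k}` with `m_k = b_{k+1} - b_{k-1}`. The defining relation
`F^{(k)} (1 - c_k F^{(k+1)}) = 1` and the three-term recurrence shared by `A_k` and `B_k` give
`B_{k+1} f - A_{k+1} = c_k F^{(k+1)} (B_k f - A_k)`, hence
`B_k f - A_k = a_0 ⋯ a_{k-1} x^{m_0 + ⋯ + m_{k-1}} f F^{(1)} ⋯ F^{(k)}`.
Every `F^{(k)}` has constant term `1` because `m_k ≥ 1`, and the exponent telescopes to
`b_{k-1} + b_k + 1`; both claims are then read off the lowest-order term.
-/

open PowerSeries Finset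

section ContinuedFractionError

variable {S : Type*} [CommRing S] {c F A B : ℕ → S}

theorem convergent_error_succ (hF : ∀ k, F k * (1 - c k * F (k + 1)) = 1)
    (hA0 : A 0 = 0) (hA1 : A 1 = 1) (hB0 : B 0 = 1) (hB1 : B 1 = 1)
    (hArec : ∀ n, A (n + 2) = A (n + 1) - c n * A n)
    (hBrec : ∀ n, B (n + 2) = B (n + 1) - c n * B n) (k : ℕ) :
    B (k + 1) * F 0 - A (k + 1) = c k * F (k + 1) * (B k * F 0 - A k) := by
  induction k with
  | zero =>
    rw [hA0, hA1, hB0, hB1]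
    linear_combination hF 0
  | succ k ih =>
    rw [hArec, hBrec]
    linear_combination c k * (B k * F 0 - A k) * hF (k + 1) +
      (1 - c (k + 1) * F (k + 2)) * ih

theorem convergent_error_eq_prod (hF : ∀ k, F k * (1 - c k * F (k + 1)) = 1)
    (hA0 : A 0 = 0) (hA1 : A 1 = 1) (hB0 : B 0 = 1) (hB1 : B 1 = 1)
    (hArec : ∀ n, A (n + 2) = A (n + 1) - c n * A n)
    (hBrec : ∀ n, B (n + 2) = B (n + 1) - c n * B n) (k : ℕ) :
    B k * F 0 - A k = (∏ i ∈ range k, c i * F (i + 1)) * F 0 := by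
  induction k with
  | zero => simp [hA0, hB0]
  | succ k ih =>
    rw [convergent_error_succ hF hA0 hA1 hB0 hB1 hArec hBrec, ih, prod_range_succ]
    ring

end ContinuedFractionError

theorem PowerSeries.constantCoeff_eq_one_of_mul_one_sub_X_pow {R : Type*} [CommRing R]
    {F G : R⟦X⟧} {a : R} {m : ℕ} (hm : m ≠ 0) (h : F * (1 - C a * X ^ m * G) = 1) :
    constantCoeff F = 1 := by
  simpa [zero_pow hm] using congrArg constantCoeff h

theorem sum_range_toNat_sub_eq (b : ℤ → ℤ) (hb : ∀ i : ℕ, b (i - 1) ≤ b (i + 1)) (k : ℕ) :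
    ((∑ i ∈ range k, (b (i + 1) - b (i - 1)).toNat : ℕ) : ℤ) =
      b (k - 1) + b k - (b (-1) + b 0) := by
  have htoNat (i : ℕ) : ((b (i + 1) - b (i - 1)).toNat : ℤ) = b (i + 1) - b (i - 1) :=
    Int.toNat_of_nonneg (by linarith [hb i])
  set g : ℕ → ℤ := fun i => b i + b ((i : ℤ) - 1)
  calc ((∑ i ∈ range k, (b (i + 1) - b (i - 1)).toNat : ℕ) : ℤ)
      = ∑ i ∈ range k, (g (i + 1) - g i) := by
        push_cast
        refine sum_congr rfl fun i _ => ?_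
        simp only [g, htoNat, Nat.cast_succ, add_sub_cancel_right]
        ring
    _ = b (k - 1) + b k - (b (-1) + b 0) := by
        rw [sum_range_sub]
        simp only [g]
        push_cast
        ring

theorem cFrac_approximation_general {K : Type*} [Field K] (a : ℕ → K) (b : ℤ → ℤ)
    (hbneg : b (-1) = -1) (hb0 : b 0 = 0)
    (hgap : ∀ k : ℤ, -1 ≤ k → 1 ≤ b (k + 2) - b k)
    (f : PowerSeries K) (F : ℕ → PowerSeries K) (hF0 : F 0 = f)
    (hF : ∀ k : ℕ, F k * (1 - PowerSeries.C (R := K) (a k) *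
      PowerSeries.X ^ (b ((k : ℤ) + 1) - b ((k : ℤ) - 1)).toNat * F (k + 1)) = 1)
    (A B : ℕ → Polynomial K)
    (hA0 : A 0 = 0) (hA1 : A 1 = 1) (hB0 : B 0 = 1) (hB1 : B 1 = 1)
    (hArec : ∀ n : ℕ, A (n + 2) = A (n + 1) -
      Polynomial.C (a n) * Polynomial.X ^ (b ((n : ℤ) + 1) - b ((n : ℤ) - 1)).toNat * A n)
    (hBrec : ∀ n : ℕ, B (n + 2) = B (n + 1) -
      Polynomial.C (a n) * Polynomial.X ^ (b ((n : ℤ) + 1) - b ((n : ℤ) - 1)).toNat * B n) :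
    ∀ k : ℕ,
      (∀ n : ℕ, b ((k : ℤ) - 1) < (n : ℤ) → (n : ℤ) ≤ b ((k : ℤ) - 1) + b (k : ℤ) →
        PowerSeries.coeff (R := K) n ((B k : PowerSeries K) * f - (A k : PowerSeries K)) = 0) ∧
      PowerSeries.coeff (R := K) (b ((k : ℤ) - 1) + b (k : ℤ) + 1).toNat
          ((B k : PowerSeries K) * f - (A k : PowerSeries K)) =
        ∏ i ∈ Finset.range k, a i := by
  intro k
  set m : ℕ → ℕ := fun i => (b ((i : ℤ) + 1) - b ((i : ℤ) - 1)).toNat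
  have hgap' (i : ℕ) : 1 ≤ b ((i : ℤ) + 1) - b ((i : ℤ) - 1) := by
    convert hgap (i - 1) (by omega) using 3
    ring
  have hN : ((∑ i ∈ range k, m i : ℕ) : ℤ) = b ((k : ℤ) - 1) + b k + 1 := by
    rw [sum_range_toNat_sub_eq b (fun i => by linarith [hgap' i]), hbneg, hb0]
    ring
  have herr : (B k : K⟦X⟧) * f - (A k : K⟦X⟧) =
      X ^ (∑ i ∈ range k, m i) * (C (∏ i ∈ range k, a i) * (f * ∏ i ∈ range k, F (i + 1))) := by
    rw [← hF0]
    refine (convergent_error_eq_prod (c := fun i => C (a i) * X ^ m i)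
      (A := fun n => (A n : K⟦X⟧)) (B := fun n => (B n : K⟦X⟧)) hF
      (by simp [hA0]) (by simp [hA1]) (by simp [hB0]) (by simp [hB1])
      (fun n => by simp [hArec n, m]) (fun n => by simp [hBrec n, m]) k).trans ?_
    rw [prod_mul_distrib, prod_mul_distrib, prod_pow_eq_pow_sum, ← map_prod]
    ring
  have hunit : constantCoeff (f * ∏ i ∈ range k, F (i + 1)) = 1 := by
    have hF1 (i : ℕ) : constantCoeff (F i) = 1 :=
      constantCoeff_eq_one_of_mul_one_sub_X_pow (by have := hgap' i; omega) (hF i)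
    simp [← hF0, map_prod, hF1]
  refine ⟨fun n _ hn => ?_, ?_⟩
  · rw [herr, coeff_X_pow_mul', if_neg (by omega)]
  · rw [show (b ((k : ℤ) - 1) + b k + 1).toNat = ∑ i ∈ range k, m i by omega, herr,
      coeff_X_pow_mul', if_pos le_rfl, Nat.sub_self, coeff_zero_eq_constantCoeff, map_mul,
      constantCoeff_C, hunit, mul_one]

/-- If `f` is given by the C-fraction with coefficients `a_k` and exponents
`b_{k+1} − b_{k−1}`, then the coefficients of `B_k(x)·f(x) − A_k(x)` vanish for
`b_{k−1} < n ≤ b_{k−1} + b_k`, and the coefficient of `x^{b_{k−1}+b_k+1}` equals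
`a₀ a₁ ⋯ a_{k−1}`. -/
theorem cFrac_approximation {K : Type*} [Field K] (a : ℕ → K) (b : ℤ → ℤ)
    (hbneg : b (-1) = -1) (hb0 : b 0 = 0)
    (hmono : ∀ k : ℤ, -1 ≤ k → b k ≤ b (k + 1))
    (hgap : ∀ k : ℤ, -1 ≤ k → 1 ≤ b (k + 2) - b k)
    (f : PowerSeries K) (F : ℕ → PowerSeries K) (hF0 : F 0 = f)
    (hF : ∀ k : ℕ, F k * (1 - PowerSeries.C (R := K) (a k) *
      PowerSeries.X ^ (b ((k : ℤ) + 1) - b ((k : ℤ) - 1)).toNat * F (k + 1)) = 1)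
    (A B : ℕ → Polynomial K)
    (hA0 : A 0 = 0) (hA1 : A 1 = 1) (hB0 : B 0 = 1) (hB1 : B 1 = 1)
    (hArec : ∀ n : ℕ, A (n + 2) = A (n + 1) -
      Polynomial.C (a n) * Polynomial.X ^ (b ((n : ℤ) + 1) - b ((n : ℤ) - 1)).toNat * A n)
    (hBrec : ∀ n : ℕ, B (n + 2) = B (n + 1) -
      Polynomial.C (a n) * Polynomial.X ^ (b ((n : ℤ) + 1) - b ((n : ℤ) - 1)).toNat * B n) :
    ∀ k : ℕ,
      (∀ n : ℕ, b ((k : ℤ) - 1) < (n : ℤ) → (n : ℤ) ≤ b ((k : ℤ) - 1) + b (k : ℤ) →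
        PowerSeries.coeff (R := K) n ((B k : PowerSeries K) * f - (A k : PowerSeries K)) = 0) ∧
      PowerSeries.coeff (R := K) (b ((k : ℤ) - 1) + b (k : ℤ) + 1).toNat
          ((B k : PowerSeries K) * f - (A k : PowerSeries K)) =
        ∏ i ∈ Finset.range k, a i :=
  cFrac_approximation_general a b hbneg hb0 hgap f F hF0 hF A B hA0 hA1 hB0 hB1 hArec hBrec
end

section
/- Let K be a field, (a_k)_{k≥0} a sequence in K, and (b_k)_{k≥−1} a nondecreasing sequence of integers with b_{−1} = −1, b_0 = 0 and b_{k+2} − b_k ≥ 1 for all k ≥ −1. Suppose f = ∑_{n≥0} f_n x^n is a formal power series over K given by the C-fraction with coefficients (a_k) and exponents m_k = b_{k+1} − b_{k−1}, i.e. there exist formal power series (F^{(k)})_{k≥0} with F^{(0)} = f and F^{(k)} · (1 − a_k x^{m_k} F^{(k+1)}) = 1 for all k. Let Λ be the linear functional on K[x] with Λ(x^n) = f_n, and let r_k(x) be the polynomials defined by r_0 = 1, r_1 = x and r_k = x^{b_{k−1}−b_{k−2}} r_{k−1} − a_{k−2} r_{k−2} for k ≥ 2. Then for every k ≥ 0: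 Λ(r_k(x) x^n) = 0 for all integers n with 0 ≤ n < b_k, and Λ(r_k(x) x^{b_k}) = a_0 a_1 ⋯ a_{k−1}. -/
/-!
Write `c_k = a_k x^{m_k}` and let `P_k / Q_k` be the convergents of the continued fraction
`1 / (1 - c₀ / (1 - c₁ / ⋯))`. The relations `F_k (1 - c_k F_{k+1}) = 1` give, by induction,
`f Q_k - P_k = c₀ ⋯ c_{k-1} F₁ ⋯ F_k f`, a series of order
`m₀ + ⋯ + m_{k-1} = b_k + b_{k-1} + 1` with leading coefficient `a₀ ⋯ a_{k-1}`, while `P_k` has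
degree at most `b_{k-1}`. Since `r_k(x) = x^{b_{k-1}+1} Q_k(1/x)`, the value `Λ(r_k xⁿ)` is the
coefficient of `x^{n + b_{k-1} + 1}` in `f Q_k`, which vanishes for `n < b_k` and equals
`a₀ ⋯ a_{k-1}` at `n = b_k`.
-/

open PowerSeries Finset

section

variable {R : Type*} [CommRing R]

/-- With `u₀ = 0, u₁ = 1` (resp. `u₀ = u₁ = 1`) these are the numerators (resp. denominators)
of the convergents of `1 / (1 - c₀ / (1 - c₁ / (1 - ⋯)))`. -/
def convergentSeq (c : ℕ → R) (u₀ u₁ : R) : ℕ → R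
  | 0 => u₀
  | 1 => u₁
  | k + 2 => convergentSeq c u₀ u₁ (k + 1) - c k * convergentSeq c u₀ u₁ k

theorem mul_convergentSeq_sub_convergentSeq {c : ℕ → R} {F : ℕ → R}
    (hF : ∀ k, F k * (1 - c k * F (k + 1)) = 1) (k : ℕ) :
    F 0 * convergentSeq c 1 1 k - convergentSeq c 0 1 k =
      (∏ i ∈ range k, c i * F (i + 1)) * F 0 := by
  induction k using Nat.twoStepInduction with
  | zero => simp [convergentSeq]
  | one => simp only [convergentSeq, prod_range_one]; linear_combination hF 0
  | more k ih₀ ih₁ =>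
    simp only [convergentSeq, prod_range_succ] at ih₁ ⊢
    linear_combination ih₁ - c k * ih₀ +
      (∏ i ∈ range k, c i * F (i + 1)) * c k * F 0 * hF (k + 1)

theorem mul_convergentSeq_eq {a : ℕ → R} {m : ℕ → ℕ} {F : ℕ → R⟦X⟧}
    (hF : ∀ k, F k * (1 - C (a k) * X ^ m k * F (k + 1)) = 1) (k : ℕ) :
    F 0 * convergentSeq (fun i ↦ C (a i) * X ^ m i) 1 1 k =
      convergentSeq (fun i ↦ C (a i) * X ^ m i) 0 1 k +
        C (∏ i ∈ range k, a i) *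
          ((X ^ ∑ i ∈ range k, m i) * ((∏ i ∈ range k, F (i + 1)) * F 0)) := by
  rw [← sub_eq_iff_eq_add', mul_convergentSeq_sub_convergentSeq hF, prod_mul_distrib,
    prod_mul_distrib, ← map_prod, prod_pow_eq_pow_sum]
  ring

theorem coeff_convergentSeq_zero_one_eq_zero {a : ℕ → R} {m D : ℕ → ℕ} (hD1 : 1 ≤ D 1)
    (hD : ∀ k, D (k + 1) ≤ D (k + 2)) (hm : ∀ k, m k + D k ≤ D (k + 2)) (k : ℕ) :
    ∀ j, D k ≤ j → coeff j (convergentSeq (fun i ↦ C (a i) * X ^ m i) 0 1 k) = 0 := by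
  induction k using Nat.twoStepInduction with
  | zero => simp [convergentSeq]
  | one => intro j hj; simp [convergentSeq, coeff_one, show j ≠ 0 by omega]
  | more k ih₀ ih₁ =>
    intro j hj
    have := hD k
    have := hm k
    rw [convergentSeq, map_sub, ih₁ j (by omega), mul_assoc, coeff_C_mul, coeff_X_pow_mul',
      if_pos (by omega), ih₀ _ (by omega), mul_zero, sub_zero]

theorem constantCoeff_eq_one_of_mul_one_sub {F G : R⟦X⟧} {a : R} {m : ℕ} (hm : m ≠ 0)
    (h : F * (1 - C a * X ^ m * G) = 1) : constantCoeff F = 1 := by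
  simpa [hm] using congrArg constantCoeff h

/-- `r_k` is the reversal `x^{D_k} Q_k(1/x)` of the denominator `Q_k`. -/
theorem apply_mul_X_pow_eq_coeff_mul_convergentSeq {a : ℕ → R} {m e D : ℕ → ℕ}
    (hD0 : D 0 = 0) (hD1 : D 1 = 1) (he : ∀ k, D (k + 2) = e k + D (k + 1))
    (hm : ∀ k, D (k + 2) = m k + D k) {f : R⟦X⟧} {Λ : Polynomial R →ₗ[R] R}
    (hΛ : ∀ n, Λ (Polynomial.X ^ n) = coeff n f) {r : ℕ → Polynomial R}
    (hr0 : r 0 = 1) (hr1 : r 1 = Polynomial.X)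
    (hr : ∀ k, r (k + 2) = Polynomial.X ^ e k * r (k + 1) - Polynomial.C (a k) * r k)
    (k : ℕ) :
    ∀ n, Λ (r k * Polynomial.X ^ n) =
      coeff (n + D k) (f * convergentSeq (fun i ↦ C (a i) * X ^ m i) 1 1 k) := by
  induction k using Nat.twoStepInduction with
  | zero => intro n; simp [convergentSeq, hr0, hD0, hΛ]
  | one => intro n; simp [convergentSeq, hr1, hD1, hΛ, ← pow_succ']
  | more k ih₀ ih₁ =>
    intro n
    have hsplit : r (k + 2) * Polynomial.X ^ n =
        r (k + 1) * Polynomial.X ^ (n + e k) - a k • (r k * Polynomial.X ^ n) := by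
      rw [hr, Polynomial.smul_eq_C_mul, pow_add]; ring
    rw [hsplit, map_sub, map_smul, ih₀, ih₁, convergentSeq, mul_sub, map_sub,
      show f * (C (a k) * X ^ m k * convergentSeq (fun i ↦ C (a i) * X ^ m i) 1 1 k) =
        C (a k) * (X ^ m k * (f * convergentSeq (fun i ↦ C (a i) * X ^ m i) 1 1 k)) by ring,
      coeff_C_mul, show n + D (k + 2) = n + D k + m k by rw [hm]; ring, coeff_X_pow_mul,
      show n + e k + D (k + 1) = n + D k + m k by rw [add_assoc, ← he, hm]; ring, smul_eq_mul]

theorem sum_range_add_eq_add {m D : ℕ → ℕ} (hm : ∀ k, D (k + 2) = m k + D k) (k : ℕ) :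
    ∑ i ∈ range k, m i + (D 1 + D 0) = D (k + 1) + D k := by
  induction k with
  | zero => simp [add_comm]
  | succ k ih => rw [sum_range_succ, hm]; omega

theorem cFrac_orthogonality_of_index {a : ℕ → R} {m e D : ℕ → ℕ} (hD0 : D 0 = 0) (hD1 : D 1 = 1)
    (he : ∀ k, D (k + 2) = e k + D (k + 1)) (hm : ∀ k, D (k + 2) = m k + D k)
    (hm0 : ∀ k, m k ≠ 0) {F : ℕ → R⟦X⟧}
    (hF : ∀ k, F k * (1 - C (a k) * X ^ m k * F (k + 1)) = 1) {Λ : Polynomial R →ₗ[R] R}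
    (hΛ : ∀ n, Λ (Polynomial.X ^ n) = coeff n (F 0)) {r : ℕ → Polynomial R}
    (hr0 : r 0 = 1) (hr1 : r 1 = Polynomial.X)
    (hr : ∀ k, r (k + 2) = Polynomial.X ^ e k * r (k + 1) - Polynomial.C (a k) * r k)
    (k : ℕ) :
    (∀ n, n + 1 < D (k + 1) → Λ (r k * Polynomial.X ^ n) = 0) ∧
      ∀ n, n + 1 = D (k + 1) → Λ (r k * Polynomial.X ^ n) = ∏ i ∈ range k, a i := by
  have hG : constantCoeff ((∏ i ∈ range k, F (i + 1)) * F 0) = 1 := by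
    simp [map_prod, fun i ↦ constantCoeff_eq_one_of_mul_one_sub (hm0 i) (hF i)]
  have hsum := sum_range_add_eq_add hm k
  have hΛr (n : ℕ) : Λ (r k * Polynomial.X ^ n) = if ∑ i ∈ range k, m i ≤ n + D k then
      (∏ i ∈ range k, a i) * coeff (n + D k - ∑ i ∈ range k, m i)
        ((∏ i ∈ range k, F (i + 1)) * F 0) else 0 := by
    rw [apply_mul_X_pow_eq_coeff_mul_convergentSeq hD0 hD1 he hm hΛ hr0 hr1 hr,
      mul_convergentSeq_eq hF, map_add, coeff_convergentSeq_zero_one_eq_zero (by omega)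
        (fun k ↦ (he k).symm ▸ le_add_self) (fun k ↦ (hm k).ge) k _ le_add_self, zero_add,
      coeff_C_mul, coeff_X_pow_mul', mul_ite, mul_zero]
  refine ⟨fun n hn ↦ by rw [hΛr, if_neg (by omega)], fun n hn ↦ ?_⟩
  rw [hΛr, if_pos (by omega), show n + D k - ∑ i ∈ range k, m i = 0 by omega,
    coeff_zero_eq_constantCoeff_apply, hG, mul_one]

end

/-- Generalized orthogonality: if `f` is given by the C-fraction with coefficients `a_k`
and exponents `b_{k+1} − b_{k−1}`, `Λ` is the linear functional with `Λ(xⁿ) = fₙ`, and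
`r_k` are the associated polynomials, then `Λ(r_k(x) xⁿ) = 0` for `n < b_k` and
`Λ(r_k(x) x^{b_k}) = a₀ ⋯ a_{k−1}`. -/
theorem cFrac_orthogonality {K : Type*} [Field K] (a : ℕ → K) (b : ℤ → ℤ)
    (hbneg : b (-1) = -1) (hb0 : b 0 = 0)
    (hmono : ∀ k : ℤ, -1 ≤ k → b k ≤ b (k + 1))
    (hgap : ∀ k : ℤ, -1 ≤ k → 1 ≤ b (k + 2) - b k)
    (f : PowerSeries K) (F : ℕ → PowerSeries K) (hF0 : F 0 = f)
    (hF : ∀ k : ℕ, F k * (1 - PowerSeries.C (a k) *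
      PowerSeries.X ^ (b ((k : ℤ) + 1) - b ((k : ℤ) - 1)).toNat * F (k + 1)) = 1)
    (Λ : Polynomial K →ₗ[K] K)
    (hΛ : ∀ n : ℕ, Λ (Polynomial.X ^ n) = PowerSeries.coeff n f)
    (r : ℕ → Polynomial K)
    (hr0 : r 0 = 1) (hr1 : r 1 = Polynomial.X)
    (hrrec : ∀ k : ℕ, r (k + 2) =
      Polynomial.X ^ (b ((k : ℤ) + 1) - b (k : ℤ)).toNat * r (k + 1) -
        Polynomial.C (a k) * r k) :
    ∀ k : ℕ,
      (∀ n : ℕ, (n : ℤ) < b (k : ℤ) → Λ (r k * Polynomial.X ^ n) = 0) ∧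
      Λ (r k * Polynomial.X ^ (b (k : ℤ)).toNat) = ∏ i ∈ Finset.range k, a i := by
  have hb (k : ℕ) : 0 ≤ b k := by
    induction k with
    | zero => simp [hb0]
    | succ k ih => push_cast; linarith [hmono k (by omega)]
  set D : ℕ → ℕ := fun k ↦ (b (k - 1) + 1).toNat
  have hD (k : ℕ) : (D k : ℤ) = b (k - 1) + 1 := by
    cases k with
    | zero => simp [D, hbneg]
    | succ k => simp only [D]; push_cast; simp only [add_sub_cancel_right]; have := hb k; omega
  have hD₁ (k : ℕ) : (D (k + 1) : ℤ) = b k + 1 := by simpa using hD (k + 1)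
  have hD₂ (k : ℕ) : (D (k + 2) : ℤ) = b (k + 1) + 1 := by
    simpa [add_sub_assoc] using hD (k + 2)
  have hgap' (k : ℕ) : 1 ≤ b (k + 1) - b (k - 1) := by
    simpa [sub_add_eq_add_sub, add_sub_assoc] using hgap (k - 1) (by omega)
  intro k
  obtain ⟨h_lt, h_eq⟩ := cFrac_orthogonality_of_index (a := a) (D := D)
    (by simpa [hbneg] using hD 0) (by simpa [hb0] using hD₁ 0)
    (fun k ↦ by have := hD₂ k; have := hD₁ k; have := hmono k (by omega); omega)
    (fun k ↦ by have := hD₂ k; have := hD k; have := hgap' k; omega)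
    (fun k ↦ by have := hgap' k; omega) hF (hF0 ▸ hΛ) hr0 hr1 hrrec k
  have := hD₁ k
  have := hb k
  exact ⟨fun n hn ↦ h_lt n (by omega), h_eq _ (by omega)⟩
end

section
/- (Andrews–Wimp) Let K be a field, let s = ∑_{n≥0} s_n x^n be a formal power series over K with s_0 = 1, and let t = ∑_{n≥0} t_n x^n be its multiplicative inverse, s·t = 1. Then for every n ≥ 1, det(s_{i+j})_{i,j=0}^{n} = (−1)^n · det(t_{i+j+2})_{i,j=0}^{n−1}, where det(s_{i+j})_{i,j=0}^{n} denotes the determinant of the (n+1)×(n+1) matrix with (i,j) entry s_{i+j}. -/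
/-!
Let `T` be the lower triangular Toeplitz matrix of `t` and `H` the Hankel matrix of `s`. Since
`t * s = 1`, the entries of `T * H` are truncated convolutions of the coefficients, and splitting
the convolution `∑_{a+b=N} t_a s_b = [N = 0]` into two pieces shows that the first column of
`T * H` is `e₀`, while its remaining block is `-(A * Bᵀ)`, where `A = (t_{i+j+2})` and `B` is the
lower triangular Toeplitz matrix of `s`. Comparing determinants gives
`t₀^{n+1} det H = (-1)^n det A · s₀^n`.
-/

open Finset Matrix PowerSeries

theorem Finset.sum_range_ite_le {M : Type*} [AddCommMonoid M] {i n : ℕ} (hi : i < n)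
    (f : ℕ → M) : ∑ k ∈ range n, (if k ≤ i then f k else 0) = ∑ k ∈ range (i + 1), f k := by
  rw [← sum_filter]
  congr 1
  ext k
  simp only [mem_filter, mem_range]
  omega

namespace Matrix

variable {R : Type*}

def hankel (u : ℕ → R) (c n : ℕ) : Matrix (Fin n) (Fin n) R :=
  of fun i j => u (i + j + c)

def toeplitzLower [Zero R] (u : ℕ → R) (n : ℕ) : Matrix (Fin n) (Fin n) R :=
  of fun i j => if (j : ℕ) ≤ i then u (i - j) else 0

section Semiring

variable [Semiring R] (t s : ℕ → R) (c : ℕ) {n : ℕ} (i j : Fin n)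

theorem toeplitzLower_mul_hankel_apply :
    (toeplitzLower t n * hankel s c n) i j = ∑ k ∈ range (i + 1), t (i - k) * s (k + j + c) := by
  simp only [mul_apply, toeplitzLower, hankel, of_apply, ite_mul, zero_mul]
  rw [Fin.sum_univ_eq_sum_range (fun k => if k ≤ i then t (i - k) * s (k + j + c) else 0),
    sum_range_ite_le i.isLt]

theorem hankel_mul_transpose_toeplitzLower_apply :
    (hankel t c n * (toeplitzLower s n)ᵀ) i j = ∑ k ∈ range (j + 1), t (i + k + c) * s (j - k) := by
  simp only [mul_apply, toeplitzLower, hankel, transpose_apply, of_apply, mul_ite, mul_zero]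
  rw [Fin.sum_univ_eq_sum_range (fun k => if k ≤ j then t (i + k + c) * s (j - k) else 0),
    sum_range_ite_le j.isLt]

end Semiring

variable [CommRing R]

theorem det_toeplitzLower (u : ℕ → R) (n : ℕ) : (toeplitzLower u n).det = u 0 ^ n := by
  rw [det_of_isLowerTriangular (toeplitzLower u n) fun i j (hij : i < j) =>
    if_neg (not_le.2 (Fin.lt_def.1 hij))]
  simp [toeplitzLower]

theorem det_eq_det_submatrix_succ_of_col_zero {n : ℕ} (M : Matrix (Fin (n + 1)) (Fin (n + 1)) R)
    (h0 : M 0 0 = 1) (hcol : ∀ i : Fin n, M i.succ 0 = 0) :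
    M.det = (M.submatrix Fin.succ Fin.succ).det := by
  simp [det_succ_column_zero M, Fin.sum_univ_succ, h0, hcol]

end Matrix

namespace PowerSeries

section Semiring

variable {R : Type*} [Semiring R] (t s : R⟦X⟧)

theorem coeff_mul_eq_sum_add_sum (p q : ℕ) :
    coeff (p + q + 1) (t * s) =
      ∑ k ∈ range (p + 1), coeff (p - k) t * coeff (k + q + 1) s +
        ∑ k ∈ range (q + 1), coeff (p + 1 + k) t * coeff (q - k) s := by
  rw [coeff_mul, Nat.sum_antidiagonal_eq_sum_range_succ_mk,
    show (p + q + 1).succ = p + 1 + (q + 1) by omega, sum_range_add, ← sum_range_reflect]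
  congr 1 <;> refine sum_congr rfl fun k hk => ?_ <;> rw [mem_range] at hk <;> congr 3 <;> omega

theorem toeplitzLower_mul_hankel_apply_zero {n : ℕ} (i : Fin (n + 1)) :
    (toeplitzLower (coeff · t) (n + 1) * hankel (coeff · s) 0 (n + 1)) i 0 = coeff i (t * s) := by
  rw [toeplitzLower_mul_hankel_apply, coeff_mul, Nat.sum_antidiagonal_eq_sum_range_succ_mk,
    ← sum_range_reflect]
  refine sum_congr rfl fun k hk => ?_
  rw [mem_range] at hk
  congr 3
  omega

end Semiring

variable {R : Type*} [CommRing R] {s t : R⟦X⟧}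

theorem submatrix_succ_toeplitzLower_mul_hankel (hts : t * s = 1) (n : ℕ) :
    (toeplitzLower (coeff · t) (n + 1) * hankel (coeff · s) 0 (n + 1)).submatrix Fin.succ Fin.succ =
      -(hankel (coeff · t) 2 n * (toeplitzLower (coeff · s) n)ᵀ) := by
  ext i j
  have h := coeff_mul_eq_sum_add_sum t s (i + 1) j
  rw [hts, coeff_one, if_neg (by omega)] at h
  rw [submatrix_apply, toeplitzLower_mul_hankel_apply, neg_apply,
    hankel_mul_transpose_toeplitzLower_apply, eq_neg_iff_add_eq_zero, h]
  simp only [Fin.val_succ]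
  congr 1
  exact sum_congr rfl fun k _ => by rw [show (i : ℕ) + 1 + 1 + k = i + k + 2 by omega]

theorem coeff_zero_pow_mul_det_hankel (hts : t * s = 1) (n : ℕ) :
    coeff 0 t ^ (n + 1) * (hankel (coeff · s) 0 (n + 1)).det =
      (-1) ^ n * (hankel (coeff · t) 2 n).det * coeff 0 s ^ n := by
  have hcol := toeplitzLower_mul_hankel_apply_zero t s (n := n)
  rw [← det_toeplitzLower (coeff · t), ← det_mul,
    det_eq_det_submatrix_succ_of_col_zero _ (by simp [hcol, hts]) fun i => by simp [hcol, hts],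
    submatrix_succ_toeplitzLower_mul_hankel hts, det_neg, det_mul, det_transpose,
    det_toeplitzLower, Fintype.card_fin, mul_assoc]

end PowerSeries

/-- (Andrews–Wimp) If `s` is a formal power series with constant term 1 and `t` is its
multiplicative inverse, then `det(s_{i+j})_{i,j=0}^n = (−1)^n det(t_{i+j+2})_{i,j=0}^{n−1}`
for all `n ≥ 1`. -/
theorem andrews_wimp {K : Type*} [Field K] (s t : PowerSeries K)
    (hs0 : PowerSeries.coeff 0 s = 1) (hst : s * t = 1) :
    ∀ n : ℕ, 1 ≤ n →
      Matrix.det (Matrix.of fun i j : Fin (n + 1) =>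
          PowerSeries.coeff ((i : ℕ) + (j : ℕ)) s) =
        (-1) ^ n * Matrix.det (Matrix.of fun i j : Fin n =>
          PowerSeries.coeff ((i : ℕ) + (j : ℕ) + 2) t) := by
  intro n _
  have ht0 : coeff 0 t = 1 := by
    rw [coeff_zero_eq_constantCoeff_apply] at hs0 ⊢
    simpa [hs0] using congrArg constantCoeff hst
  have h := coeff_zero_pow_mul_det_hankel (mul_comm s t ▸ hst) n
  rwa [ht0, hs0, one_pow, one_pow, one_mul, mul_one] at h
end

section
/- Let K be a field, let s = ∑_{n≥0} s_n x^n be a formal power series over K with s_0 = 1 and let t = ∑_{n≥0} t_n x^n be its multiplicative inverse. Extend s by setting s_n = 0 for n < 0. Let m ≥ 0. Then: (i) det(s_{i+j−m})_{i,j=0}^{n} = 0 for every n with 0 ≤ n < m; (ii) det(s_{i+j−m})_{i,j=0}^{m} = (−1)^{\binom{m+1}{2}}; and (iii) for every n ≥ 1, det(s_{i+j−m})_{i,j=0}^{n+m} = (−1)^{n+\binom{m+1}{2}} · det(t_{i+j+m+2})_{i,j=0}^{n−1}. -/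
/-!
Multiplying `A = (s_{i+j-m})` of size `m + 1 + n` on the right by the unitriangular Toeplitz
matrix `(t_{j-k})_{k ≤ j}` makes it block lower triangular, because `s t = 1`: row `i ≤ m`
becomes the unit row `e_{m-i}`, and the lower right `n × n` block is `-L H` with
`L = (s_{p-b})_{b ≤ p}` unitriangular and `H = (t_{b+q+m+2})`. The top left block is the
antidiagonal unit matrix, of determinant `(-1)^C(m+1,2)`. Below size `m + 1` the first row of
`A` vanishes.
-/

section

open Finset Matrix PowerSeries

variable {R : Type*} [CommRing R]

noncomputable def intCoeff (f : R⟦X⟧) (n : ℤ) : R := if 0 ≤ n then coeff n.toNat f else 0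

@[simp]
lemma intCoeff_natCast (f : R⟦X⟧) (n : ℕ) : intCoeff f n = coeff n f := by
  simp [intCoeff]

lemma intCoeff_of_neg (f : R⟦X⟧) {n : ℤ} (hn : n < 0) : intCoeff f n = 0 :=
  if_neg hn.not_ge

def shiftedHankel (u : ℤ → R) (m N : ℕ) : Matrix (Fin N) (Fin N) R :=
  of fun i j => u ((i : ℤ) + (j : ℤ) - (m : ℤ))

noncomputable def lowerToeplitz (f : R⟦X⟧) (N : ℕ) : Matrix (Fin N) (Fin N) R :=
  of fun i j => if j ≤ i then coeff ((i : ℕ) - j) f else 0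

lemma det_lowerToeplitz (f : R⟦X⟧) (N : ℕ) : (lowerToeplitz f N).det = coeff 0 f ^ N := by
  rw [det_of_isLowerTriangular (lowerToeplitz f N)
    fun i j (hij : i < j) => if_neg hij.not_ge]
  simp [lowerToeplitz]

lemma sum_fin_eq_sum_range_of_eq_zero {N j : ℕ} (hj : j < N) (g : ℕ → R)
    (hg : ∀ k, j < k → g k = 0) : ∑ k : Fin N, g k = ∑ k ∈ range (j + 1), g k := by
  rw [Fin.sum_univ_eq_sum_range g N]
  refine (sum_subset (range_subset_range.2 hj) fun k _ hk => hg k ?_).symm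
  simpa using hk

lemma mul_lowerToeplitz_transpose_apply {N : ℕ} (g : ℕ → ℕ → R) (f : R⟦X⟧) (i j : Fin N) :
    (of (fun i k : Fin N => g i k) * (lowerToeplitz f N)ᵀ) i j =
      ∑ k ∈ range (j + 1), g i k * coeff (j - k) f := by
  rw [mul_apply]
  refine (sum_fin_eq_sum_range_of_eq_zero j.isLt (fun k => g i k *
    if k ≤ j then coeff (j - k) f else 0) fun k hk => by simp [hk.not_ge]).trans ?_
  exact sum_congr rfl fun k hk => by rw [if_pos (Nat.lt_succ_iff.1 (mem_range.1 hk))]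

lemma lowerToeplitz_mul_apply {N : ℕ} (f : R⟦X⟧) (h : ℕ → ℕ → R) (p q : Fin N) :
    (lowerToeplitz f N * of fun b q : Fin N => h b q) p q =
      ∑ b ∈ range (p + 1), coeff (p - b) f * h b q := by
  rw [mul_apply]
  refine (sum_fin_eq_sum_range_of_eq_zero p.isLt (fun b =>
    (if b ≤ p then coeff (p - b) f else 0) * h b q) fun b hb => by simp [hb.not_ge]).trans ?_
  exact sum_congr rfl fun b hb => by rw [if_pos (Nat.lt_succ_iff.1 (mem_range.1 hb))]

variable {s t : R⟦X⟧}

lemma sum_range_coeff_mul_coeff_sub (hst : s * t = 1) (r : ℕ) :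
    ∑ a ∈ range (r + 1), coeff a s * coeff (r - a) t = if r = 0 then 1 else 0 := by
  rw [← coeff_one, ← hst, coeff_mul, Nat.sum_antidiagonal_eq_sum_range_succ_mk]

lemma sum_range_intCoeff_sub_mul_coeff (hst : s * t = 1) (q j : ℕ) :
    ∑ k ∈ range (j + 1), intCoeff s ((k : ℤ) - q) * coeff (j - k) t =
      if j = q then 1 else 0 := by
  obtain hjq | ⟨r, rfl⟩ : j < q ∨ ∃ r, j = q + r :=
    (lt_or_ge j q).imp_right Nat.exists_eq_add_of_le
  · rw [if_neg hjq.ne]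
    exact sum_eq_zero fun k hk => by
      rw [intCoeff_of_neg _ (by simp at hk; omega), zero_mul]
  · rw [show q + r + 1 = q + (r + 1) by ring, sum_range_add,
      sum_eq_zero fun k hk => by rw [intCoeff_of_neg _ (by simp at hk; omega), zero_mul], zero_add]
    simp_rw [show ∀ a, ((q + a : ℕ) : ℤ) - q = (a : ℕ) by simp, intCoeff_natCast,
      Nat.add_sub_add_left, sum_range_coeff_mul_coeff_sub hst]
    simp

lemma sum_range_coeff_add_mul_coeff (hst : s * t = 1) (p j : ℕ) :
    ∑ k ∈ range (j + 1), coeff (p + 1 + k) s * coeff (j - k) t =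
      -∑ b ∈ range (p + 1), coeff (p - b) s * coeff (b + 1 + j) t := by
  have h := sum_range_coeff_mul_coeff_sub hst (p + 1 + j)
  rw [if_neg (by omega), show p + 1 + j + 1 = (p + 1) + (j + 1) by ring, sum_range_add,
    ← sum_range_reflect] at h
  rw [eq_neg_iff_add_eq_zero, add_comm, ← h]
  congr 1
  · refine sum_congr rfl fun b hb => ?_
    have := mem_range.1 hb
    congr 3; omega
  · exact sum_congr rfl fun k _ => by congr 3; omega

lemma det_antidiagonal (m : ℕ) :
    (of fun i j : Fin (m + 1) => if (i : ℕ) + j = m then (1 : R) else 0).det =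
      (-1) ^ (m + 1).choose 2 := by
  induction m with
  | zero => simp
  | succ m ih =>
    rw [det_succ_row_zero, sum_eq_single (Fin.last (m + 1)) (fun j _ hj => ?_) (by simp)]
    · have hminor :
          (of fun i j : Fin (m + 2) => if (i : ℕ) + j = m + 1 then (1 : R) else 0).submatrix
            Fin.succ (Fin.last (m + 1)).succAbove =
          of fun i j : Fin (m + 1) => if (i : ℕ) + j = m then (1 : R) else 0 := by
        ext i j
        simp only [submatrix_apply, Fin.succAbove_last, of_apply, Fin.val_succ, Fin.val_castSucc]
        congr 1
        simp only [eq_iff_iff]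
        omega
      rw [hminor, ih, Nat.choose_succ_succ (m + 1) 1, Nat.choose_one_right, pow_add]
      simp
    · rw [of_apply, if_neg (fun h => hj (Fin.ext (by simp at h ⊢; omega))), mul_zero, zero_mul]

lemma shiftedHankel_mul_lowerToeplitz_transpose_of_le (hst : s * t = 1) {m N : ℕ}
    (i j : Fin N) (hi : (i : ℕ) ≤ m) :
    (shiftedHankel (intCoeff s) m N * (lowerToeplitz t N)ᵀ) i j =
      if (i : ℕ) + j = m then 1 else 0 := by
  obtain ⟨q, rfl⟩ := Nat.exists_eq_add_of_le hi
  refine (mul_lowerToeplitz_transpose_apply (fun a k : ℕ => intCoeff s (a + k - (i + q : ℕ))) t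
    i j).trans ?_
  simp_rw [Nat.cast_add, add_sub_add_left_eq_sub, sum_range_intCoeff_sub_mul_coeff hst]
  simp

lemma shiftedHankel_mul_lowerToeplitz_transpose_of_gt (hst : s * t = 1) {m N p : ℕ}
    (i j : Fin N) (hi : (i : ℕ) = m + 1 + p) :
    (shiftedHankel (intCoeff s) m N * (lowerToeplitz t N)ᵀ) i j =
      -∑ b ∈ range (p + 1), coeff (p - b) s * coeff (b + 1 + j) t := by
  refine (mul_lowerToeplitz_transpose_apply (fun a k : ℕ => intCoeff s (a + k - m)) t
    i j).trans ?_
  rw [← sum_range_coeff_add_mul_coeff hst]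
  refine sum_congr rfl fun k _ => ?_
  rw [hi, show ((m + 1 + p : ℕ) : ℤ) + k - m = (p + 1 + k : ℕ) by push_cast; ring,
    intCoeff_natCast]

lemma det_shiftedHankel (hs0 : coeff 0 s = 1) (hst : s * t = 1) (m n N : ℕ)
    (hN : m + 1 + n = N) :
    (shiftedHankel (intCoeff s) m N).det =
      (-1) ^ (n + (m + 1).choose 2) *
        (of fun i j : Fin n => coeff ((i : ℕ) + (j : ℕ) + m + 2) t).det := by
  subst hN
  set H := of fun i j : Fin n => coeff ((i : ℕ) + (j : ℕ) + m + 2) t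
  set M := (shiftedHankel (intCoeff s) m (m + 1 + n) * (lowerToeplitz t _)ᵀ).submatrix
    finSumFinEquiv finSumFinEquiv
  have ht0 : coeff 0 t = 1 := by
    rw [coeff_zero_eq_constantCoeff_apply] at hs0 ⊢
    simpa [hs0] using congr_arg constantCoeff hst
  have h₁₁ :
      M.toBlocks₁₁ = of fun i j : Fin (m + 1) => if (i : ℕ) + j = m then 1 else 0 := by
    ext i j
    simp only [M, toBlocks₁₁, of_apply, submatrix_apply, finSumFinEquiv_apply_left]
    rw [shiftedHankel_mul_lowerToeplitz_transpose_of_le hst _ _ (by simpa using i.is_le)]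
    simp
  have h₁₂ : M.toBlocks₁₂ = 0 := by
    ext i j
    simp only [M, toBlocks₁₂, of_apply, submatrix_apply, finSumFinEquiv_apply_left,
      finSumFinEquiv_apply_right]
    rw [shiftedHankel_mul_lowerToeplitz_transpose_of_le hst _ _ (by simpa using i.is_le),
      if_neg (by simp; omega), Matrix.zero_apply]
  have h₂₂ : M.toBlocks₂₂ = -(lowerToeplitz s n * H) := by
    ext p q
    simp only [M, toBlocks₂₂, of_apply, submatrix_apply, finSumFinEquiv_apply_right]
    rw [shiftedHankel_mul_lowerToeplitz_transpose_of_gt hst _ _ (by simp; ring),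
      Matrix.neg_apply, lowerToeplitz_mul_apply s fun b q => coeff (b + q + m + 2) t]
    refine congr_arg _ (sum_congr rfl fun b _ => ?_)
    rw [Fin.val_natAdd, show b + 1 + (m + 1 + (q : ℕ)) = b + q + m + 2 by ring]
  calc (shiftedHankel (intCoeff s) m (m + 1 + n)).det = M.det := by
        rw [det_submatrix_equiv_self, det_mul, det_transpose, det_lowerToeplitz, ht0, one_pow,
          mul_one]
    _ = _ := by
        rw [← fromBlocks_toBlocks M, h₁₁, h₁₂, h₂₂, det_fromBlocks_zero₁₂, det_antidiagonal,
          det_neg, det_mul, det_lowerToeplitz, hs0, one_pow, one_mul, Fintype.card_fin, pow_add]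
        ring

end

/-- Generalized Andrews–Wimp identity: if `s` is a power series with `s₀ = 1`, `t` its
inverse, `s` extended by zero to negative indices, and `m ≥ 0`, then the shifted Hankel
determinants `det(s_{i+j−m})` vanish for sizes `≤ m`, equal `(−1)^{C(m+1,2)}` at size
`m+1`, and satisfy
`det(s_{i+j−m})_{i,j=0}^{n+m} = (−1)^{n+C(m+1,2)} det(t_{i+j+m+2})_{i,j=0}^{n−1}`. -/
theorem andrews_wimp_shifted {K : Type*} [Field K] (s t : PowerSeries K)
    (hs0 : PowerSeries.coeff 0 s = 1) (hst : s * t = 1)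
    (s' : ℤ → K)
    (hs' : ∀ n : ℤ, s' n = if 0 ≤ n then PowerSeries.coeff n.toNat s else 0)
    (m : ℕ) :
    (∀ n : ℕ, n < m →
      Matrix.det (Matrix.of fun i j : Fin (n + 1) =>
        s' ((i : ℤ) + (j : ℤ) - (m : ℤ))) = 0) ∧
    Matrix.det (Matrix.of fun i j : Fin (m + 1) =>
        s' ((i : ℤ) + (j : ℤ) - (m : ℤ))) = (-1) ^ Nat.choose (m + 1) 2 ∧
    (∀ n : ℕ, 1 ≤ n →
      Matrix.det (Matrix.of fun i j : Fin (n + m + 1) =>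
          s' ((i : ℤ) + (j : ℤ) - (m : ℤ))) =
        (-1) ^ (n + Nat.choose (m + 1) 2) *
          Matrix.det (Matrix.of fun i j : Fin n =>
            PowerSeries.coeff ((i : ℕ) + (j : ℕ) + m + 2) t)) := by
  obtain rfl : s' = intCoeff s := funext hs'
  refine ⟨fun n hn => ?_, ?_, fun n _ => det_shiftedHankel hs0 hst m n _ (by ring)⟩
  · refine Matrix.det_eq_zero_of_row_eq_zero 0 fun j => intCoeff_of_neg s ?_
    simp only [Fin.val_zero, Nat.cast_zero, zero_add]
    omega
  · simpa [shiftedHankel] using det_shiftedHankel hs0 hst m 0 _ rfl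
end

section
/- Let K be a field, let s = ∑_{n≥0} s_n x^n be a formal power series over K with s_0 = 1, and let t = ∑_{n≥0} t_n x^n be its multiplicative inverse. Then for every n ≥ 0, det(s_{i+j+1})_{i,j=0}^{n} = (−1)^{n+1} · det(t_{i+j+1})_{i,j=0}^{n}. -/
/-!
Let `T f` be the lower triangular Toeplitz matrix `(f_{i-j})` and `H f` the shifted Hankel
matrix `(f_{i+j+1})`. Splitting the convolution sum for the coefficient of `X^(i+j+1)` in `g * f`
according to whether the index into `f` exceeds `j` gives `T g * H f + H g * (T f)ᵀ = H (g * f)`.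
If `f * g = 1` the right side vanishes, and since `det (T f) = f₀ ^ n` taking determinants
relates `det (H f)` and `det (H g)` up to the sign `(-1) ^ n`.
-/

open Finset
open scoped Matrix

noncomputable section

theorem Fin.sum_ite_val_le {M : Type*} [AddCommMonoid M] {n i : ℕ} (hi : i < n)
    (f : ℕ → M) : ∑ k : Fin n, (if (k : ℕ) ≤ i then f k else 0) = ∑ k ∈ range (i + 1), f k := by
  rw [Fin.sum_univ_eq_sum_range (fun k => if k ≤ i then f k else 0), ← sum_filter]
  congr 1
  ext k
  simp only [mem_filter, mem_range]
  omega

namespace PowerSeries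

variable {R : Type*} [CommRing R]

def shiftedHankel (f : R⟦X⟧) (n : ℕ) : Matrix (Fin n) (Fin n) R :=
  Matrix.of fun i j => coeff ((i : ℕ) + j + 1) f

def lowerToeplitz (f : R⟦X⟧) (n : ℕ) : Matrix (Fin n) (Fin n) R :=
  Matrix.of fun i j => if (j : ℕ) ≤ i then coeff ((i : ℕ) - j) f else 0

theorem det_lowerToeplitz (f : R⟦X⟧) (n : ℕ) : (lowerToeplitz f n).det = coeff 0 f ^ n := by
  rw [Matrix.det_of_isLowerTriangular (lowerToeplitz f n) fun i j hij =>
    if_neg (by simpa using hij)]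
  simp [lowerToeplitz]

theorem shiftedHankel_one (n : ℕ) : shiftedHankel (1 : R⟦X⟧) n = 0 := by
  ext i j
  simp [shiftedHankel, coeff_one]

theorem lowerToeplitz_mul_shiftedHankel_apply (f g : R⟦X⟧) {n : ℕ} (i j : Fin n) :
    (lowerToeplitz f n * shiftedHankel g n) i j =
      ∑ k ∈ range (i + 1), coeff (i - k) f * coeff (k + j + 1) g := by
  simp only [Matrix.mul_apply, lowerToeplitz, shiftedHankel, Matrix.of_apply, ite_mul, zero_mul]
  exact Fin.sum_ite_val_le i.2 fun k => coeff (i - k) f * coeff (k + j + 1) g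

theorem shiftedHankel_mul_transpose_lowerToeplitz_apply (f g : R⟦X⟧) {n : ℕ} (i j : Fin n) :
    (shiftedHankel f n * (lowerToeplitz g n)ᵀ) i j =
      ∑ k ∈ range (j + 1), coeff (i + k + 1) f * coeff (j - k) g := by
  simp only [Matrix.mul_apply, lowerToeplitz, shiftedHankel, Matrix.transpose_apply,
    Matrix.of_apply, mul_ite, mul_zero]
  exact Fin.sum_ite_val_le j.2 fun k => coeff (i + k + 1) f * coeff (j - k) g

theorem coeff_add_add_one_mul (f g : R⟦X⟧) (a b : ℕ) :
    coeff (a + b + 1) (f * g) =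
      ∑ k ∈ range (a + 1), coeff (a - k) f * coeff (k + b + 1) g +
        ∑ k ∈ range (b + 1), coeff (a + k + 1) f * coeff (b - k) g := by
  rw [coeff_mul, Nat.sum_antidiagonal_eq_sum_range_succ (fun i j => coeff i f * coeff j g),
    show (a + b + 1).succ = (a + 1) + (b + 1) by omega, sum_range_add, ← sum_range_reflect]
  congr 1 <;> refine sum_congr rfl fun k hk => ?_ <;> rw [mem_range] at hk
  · rw [show a + 1 - 1 - k = a - k by omega, show a + b + 1 - (a - k) = k + b + 1 by omega]
  · rw [show a + 1 + k = a + k + 1 by omega, show a + b + 1 - (a + k + 1) = b - k by omega]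

theorem lowerToeplitz_mul_shiftedHankel_add (f g : R⟦X⟧) (n : ℕ) :
    lowerToeplitz f n * shiftedHankel g n + shiftedHankel f n * (lowerToeplitz g n)ᵀ =
      shiftedHankel (f * g) n := by
  ext i j
  rw [Matrix.add_apply, lowerToeplitz_mul_shiftedHankel_apply,
    shiftedHankel_mul_transpose_lowerToeplitz_apply, shiftedHankel, Matrix.of_apply,
    coeff_add_add_one_mul]

theorem det_shiftedHankel_of_mul_eq_one {f g : R⟦X⟧} (h : f * g = 1) (n : ℕ) :
    (shiftedHankel f n).det = (-1) ^ n * coeff 0 f ^ (2 * n) * (shiftedHankel g n).det := by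
  have hfg : coeff 0 f * coeff 0 g = 1 := by
    simpa [coeff_zero_eq_constantCoeff] using congrArg constantCoeff h
  have hsum := lowerToeplitz_mul_shiftedHankel_add g f n
  rw [mul_comm, h, shiftedHankel_one, add_eq_zero_iff_eq_neg] at hsum
  have hdet := congrArg Matrix.det hsum
  rw [Matrix.det_mul, Matrix.det_neg, Matrix.det_mul, Matrix.det_transpose, det_lowerToeplitz,
    det_lowerToeplitz, Fintype.card_fin] at hdet
  calc (shiftedHankel f n).det = (coeff 0 f * coeff 0 g) ^ n * (shiftedHankel f n).det := by
        rw [hfg, one_pow, one_mul]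
    _ = _ := by linear_combination coeff 0 f ^ n * hdet

end PowerSeries

end

/-- If `s` is a power series with `s₀ = 1` and `t` its multiplicative inverse, then
`det(s_{i+j+1})_{i,j=0}^n = (−1)^{n+1} det(t_{i+j+1})_{i,j=0}^n` for all `n ≥ 0`. -/
theorem shifted_hankel_inverse {K : Type*} [Field K] (s t : PowerSeries K)
    (hs0 : PowerSeries.coeff 0 s = 1) (hst : s * t = 1) :
    ∀ n : ℕ,
      Matrix.det (Matrix.of fun i j : Fin (n + 1) =>
          PowerSeries.coeff ((i : ℕ) + (j : ℕ) + 1) s) =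
        (-1) ^ (n + 1) * Matrix.det (Matrix.of fun i j : Fin (n + 1) =>
          PowerSeries.coeff ((i : ℕ) + (j : ℕ) + 1) t) := by
  intro n
  have h := PowerSeries.det_shiftedHankel_of_mul_eq_one hst (n + 1)
  rwa [hs0, one_pow, mul_one] at h
end

section
/- (Buslaev's theorem) Let K be a field, (a_k)_{k≥0} a sequence in K, and (b_k)_{k≥−1} a nondecreasing sequence of integers with b_{−1} = −1, b_0 = 0 and b_{k+2} − b_k ≥ 1 for all k ≥ −1. Suppose f = ∑_{n≥0} f_n x^n is a formal power series over K for which there exist formal power series (F^{(k)})_{k≥0} with F^{(0)} = f and F^{(k)} · (1 − a_k x^{b_{k+1}−b_{k−1}} F^{(k+1)}) = 1 for all k ≥ 0, and with all a_k ≠ 0. Let d(n) = det(f_{i+j})_{i,j=0}^{n}. Then for every k ≥ 0, d(b_k) = (−1)^{\binom{b_1−b_0}{2}+\binom{b_2−b_1}{2}+⋯+\binom{b_k−b_{k−1}}{2}} · a_0^{b_k−b_0} a_1^{b_k−b_1} ⋯ a_{k−1}^{b_k−b_{k−1}}, and d(n) = 0 for every n > 0 that is not of the form b_k for some k. -/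
/-!
Let `P_k / Q_k` be the convergents of the C-fraction. Then `Q_k(0) = 1`, `deg P_k ≤ b_k`,
`deg Q_k ≤ b_k + 1`, and `f Q_k - P_k = a_0 ⋯ a_k x^{b_k + b_{k+1} + 1} F^{(0)} ⋯ F^{(k+1)}`.
For `b_k < n ≤ b_{k+1}`, multiplying the Hankel matrix of order `n + 1` on the right by a
unitriangular matrix that turns column `j > b_k` into the coefficients of `x^{i+j}` in `f Q_k`
makes it block lower triangular. The upper-left block is the Hankel matrix of order `b_k + 1`,
and the lower-right block is a Hankel matrix of `f Q_k` which vanishes above its antidiagonal.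
Its antidiagonal is `a_0 ⋯ a_k` when `n = b_{k+1}`, and its first row vanishes when
`n < b_{k+1}`.
-/

open PowerSeries Finset

theorem Finset.prod_range_succ_pow_sub {M : Type*} [CommMonoid M] (a : ℕ → M) {c : ℕ → ℕ}
    (hc : Monotone c) (k : ℕ) :
    ∏ j ∈ range (k + 1), a j ^ (c (k + 1) - c j) =
      (∏ j ∈ range k, a j ^ (c k - c j)) * (∏ j ∈ range (k + 1), a j) ^ (c (k + 1) - c k) := by
  have h : ∀ j ∈ range (k + 1),
      a j ^ (c (k + 1) - c j) = a j ^ (c k - c j) * a j ^ (c (k + 1) - c k) := fun j hj => by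
    have := hc (mem_range_succ_iff.1 hj)
    have := hc (Nat.le_add_right k 1)
    rw [← pow_add]
    congr 1
    omega
  rw [prod_congr rfl h, prod_mul_distrib, prod_pow, prod_range_succ (fun j => a j ^ (c k - c j)),
    Nat.sub_self, pow_zero, mul_one]

theorem exists_apply_le_lt_apply_succ {α : Type*} [LinearOrder α] {c : ℕ → α} {x : α}
    (h0 : c 0 ≤ x) (hx : ∃ K, x < c K) : ∃ k, c k ≤ x ∧ x < c (k + 1) := by
  by_contra! h
  obtain ⟨K, hK⟩ := hx
  exact (Nat.rec h0 h K : c K ≤ x).not_gt hK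

theorem self_le_apply_two_mul {c : ℕ → ℕ} (hc : ∀ k, c k < c (k + 2)) (j : ℕ) :
    j ≤ c (2 * j) := by
  induction j with
  | zero => exact Nat.zero_le _
  | succ j ih =>
    have := hc (2 * j)
    rw [Nat.mul_succ]
    omega

theorem sum_range_add_one_eq_add_apply_succ {m c : ℕ → ℕ} (hc0 : c 0 = 0) (hc1 : c 1 = 1)
    (hcm : ∀ k, c (k + 2) = c k + m k) (k : ℕ) : ∑ j ∈ range k, m j + 1 = c k + c (k + 1) := by
  induction k with
  | zero => simp [hc0, hc1]
  | succ k ih => rw [sum_range_succ, hcm]; omega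

namespace Matrix

variable {R : Type*} [CommRing R]

theorem det_eq_mul_of_upperRight_eq_zero {q β : ℕ} (M : Matrix (Fin (q + β)) (Fin (q + β)) R)
    (h : ∀ i j : Fin (q + β), (i : ℕ) < q → q ≤ (j : ℕ) → M i j = 0) :
    M.det = (M.submatrix (Fin.castAdd β) (Fin.castAdd β)).det *
      (M.submatrix (Fin.natAdd q) (Fin.natAdd q)).det := by
  have hblocks : M.submatrix finSumFinEquiv finSumFinEquiv =
      fromBlocks (M.submatrix (Fin.castAdd β) (Fin.castAdd β)) 0
        (M.submatrix (Fin.natAdd q) (Fin.castAdd β))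
        (M.submatrix (Fin.natAdd q) (Fin.natAdd q)) := by
    ext (i | i) (j | j) <;> simp [h]
  rw [← det_submatrix_equiv_self finSumFinEquiv M, hblocks, det_fromBlocks_zero₁₂]

theorem det_of_eq_zero_above_antidiagonal {n : ℕ} (c : R) (D : Matrix (Fin n) (Fin n) R)
    (hlt : ∀ i j : Fin n, (i : ℕ) + j + 1 < n → D i j = 0)
    (heq : ∀ i j : Fin n, (i : ℕ) + j + 1 = n → D i j = c) :
    D.det = (-1) ^ n.choose 2 * c ^ n := by
  induction n with
  | zero => simp
  | succ n ih =>
    rw [det_succ_column_zero, Finset.sum_eq_single (Fin.last n)]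
    · have hminor : (D.submatrix (Fin.last n).succAbove Fin.succ).det =
          (-1) ^ n.choose 2 * c ^ n := by
        refine ih _ (fun i j hij => hlt _ _ ?_) (fun i j hij => heq _ _ ?_) <;>
          simp only [Fin.succAbove_last, Fin.val_castSucc, Fin.val_succ] <;> omega
      rw [hminor, heq _ _ (by simp), Nat.choose_succ_left _ _ (by omega), Nat.choose_one_right]
      simp only [Fin.val_last, pow_add, pow_succ]
      ring
    · intro i _ hi
      rw [hlt i 0 (by have := Fin.val_lt_last hi; simp; omega), mul_zero, zero_mul]
    · simp

end Matrix

namespace PowerSeries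

variable {R : Type*} [CommRing R]

noncomputable def hankel (f : R⟦X⟧) (n : ℕ) : Matrix (Fin n) (Fin n) R :=
  Matrix.of fun i j => coeff ((i : ℕ) + (j : ℕ)) f

theorem coeff_add_mul_eq_sum_range {f Q : R⟦X⟧} {q : ℕ} (hQ : ∀ s, q < s → coeff s Q = 0)
    (i : ℕ) {j : ℕ} (hj : q ≤ j) :
    coeff (i + j) (f * Q) = ∑ t ∈ range (j + 1), coeff (i + t) f * coeff (j - t) Q := by
  have htail : ∑ s ∈ range i, coeff (j + 1 + s) Q * coeff (i + j - (j + 1 + s)) f = 0 :=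
    sum_eq_zero fun s _ => by rw [hQ _ (by omega), zero_mul]
  rw [mul_comm, coeff_mul, Nat.sum_antidiagonal_eq_sum_range_succ_mk, Nat.succ_eq_add_one,
    show i + j + 1 = (j + 1) + i by omega, sum_range_add, htail, add_zero, ← sum_range_reflect]
  refine sum_congr rfl fun t ht => ?_
  rw [mem_range] at ht
  rw [mul_comm, show j + 1 - 1 - t = j - t by omega, show i + j - (j - t) = i + t by omega]

theorem det_hankel_add {f Q : R⟦X⟧} {q β : ℕ} (hQ0 : constantCoeff Q = 1)
    (hQ : ∀ s, q < s → coeff s Q = 0)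
    (hfQ : ∀ t, q ≤ t → t + 1 < 2 * q + β → coeff t (f * Q) = 0) :
    (hankel f (q + β)).det =
      (hankel f q).det * (hankel (mk fun n => coeff (2 * q + n) (f * Q)) β).det := by
  classical
  -- right multiplication by `U` turns column `j ≥ q` into the coefficients of `x^{i+j}` in `f * Q`
  let U : Matrix (Fin (q + β)) (Fin (q + β)) R := Matrix.of fun t j =>
    if (j : ℕ) < q then (1 : Matrix _ _ R) t j
    else if t ≤ j then coeff ((j : ℕ) - t) Q else 0
  have hU : U.det = 1 := by
    rw [Matrix.det_of_isUpperTriangular]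
    · exact prod_eq_one fun i _ => by by_cases hi : (i : ℕ) < q <;> simp [U, hi, hQ0]
    · intro t j hjt
      have hjt : j < t := hjt
      simp [U, not_le.2 hjt, Matrix.one_apply_ne hjt.ne']
  have hHU : ∀ i j : Fin (q + β), (hankel f (q + β) * U) i j =
      if (j : ℕ) < q then coeff ((i : ℕ) + j) f else coeff ((i : ℕ) + j) (f * Q) := by
    intro i j
    split_ifs with hj
    · simp [U, hj, Matrix.mul_apply, hankel, Matrix.one_apply]
    · rw [coeff_add_mul_eq_sum_range hQ _ (not_lt.1 hj), Matrix.mul_apply]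
      simp only [U, hankel, Matrix.of_apply, if_neg hj, mul_ite, mul_zero, Fin.le_def]
      rw [Fin.sum_univ_eq_sum_range
        (fun t => if t ≤ (j : ℕ) then coeff (i + t) f * coeff (j - t) Q else 0), ← sum_filter]
      congr 1
      ext t
      simp only [mem_filter, mem_range]
      omega
  rw [← mul_one (hankel f (q + β)).det, ← hU, ← Matrix.det_mul,
    Matrix.det_eq_mul_of_upperRight_eq_zero]
  · congr 2 <;> ext i j <;> simp only [Matrix.submatrix_apply, hHU] <;> simp [hankel]
    ring_nf
  · intro i j hi hj
    rw [hHU, if_neg (by omega)]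
    exact hfQ _ (by omega) (by omega)

/-- Solutions of the three-term recurrence of the convergents, shifted by one: `y 0, y 1` play the
role of `y_{-1}, y_0`. Numerators are `cfracRec a m 0 1`, denominators `cfracRec a m 1 1`. -/
noncomputable def cfracRec (a : ℕ → R) (m : ℕ → ℕ) (y₀ y₁ : R⟦X⟧) : ℕ → R⟦X⟧
  | 0 => y₀
  | 1 => y₁
  | k + 2 => cfracRec a m y₀ y₁ (k + 1) - C (a k) * X ^ m k * cfracRec a m y₀ y₁ k

theorem coeff_C_mul_X_pow_mul (c : R) (n t : ℕ) (y : R⟦X⟧) :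
    coeff t (C c * X ^ n * y) = if n ≤ t then c * coeff (t - n) y else 0 := by
  rw [mul_assoc, coeff_C_mul, coeff_X_pow_mul', mul_ite, mul_zero]

theorem constantCoeff_C_mul_X_pow_mul (c : R) {n : ℕ} (hn : 0 < n) (y : R⟦X⟧) :
    constantCoeff (C c * X ^ n * y) = 0 := by
  simp [zero_pow hn.ne']

variable {a : ℕ → R} {m : ℕ → ℕ} {F : ℕ → R⟦X⟧}

theorem constantCoeff_cfracRec_succ (hm : ∀ k, 0 < m k) (y₀ y₁ : R⟦X⟧) (k : ℕ) :
    constantCoeff (cfracRec a m y₀ y₁ (k + 1)) = constantCoeff y₁ := by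
  induction k with
  | zero => rfl
  | succ k ih => rw [cfracRec, map_sub, ih, constantCoeff_C_mul_X_pow_mul _ (hm k), sub_zero]

theorem coeff_cfracRec_eq_zero {y₀ y₁ : R⟦X⟧} {d : ℕ → ℕ} (hd : Monotone d)
    (hm : ∀ k, d k + m k ≤ d (k + 2))
    (h₀ : ∀ t, d 0 ≤ t → coeff t y₀ = 0) (h₁ : ∀ t, d 1 ≤ t → coeff t y₁ = 0) (k : ℕ) :
    ∀ t, d k ≤ t → coeff t (cfracRec a m y₀ y₁ k) = 0 := by
  induction k using Nat.twoStepInduction with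
  | zero => exact h₀
  | one => exact h₁
  | more k ih₀ ih₁ =>
    intro t ht
    rw [cfracRec, map_sub, ih₁ t ((hd (k + 1).le_succ).trans ht), coeff_C_mul_X_pow_mul]
    split_ifs
    · rw [ih₀ _ (by have := hm k; omega), mul_zero, sub_zero]
    · rw [sub_zero]

theorem mul_cfracRec_sub_cfracRec
    (hF : ∀ k, F k * (1 - C (a k) * X ^ m k * F (k + 1)) = 1) (k : ℕ) :
    F 0 * cfracRec a m 1 1 k - cfracRec a m 0 1 k =
      C (∏ j ∈ range k, a j) * X ^ (∑ j ∈ range k, m j) * ∏ j ∈ range (k + 1), F j := by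
  induction k using Nat.twoStepInduction with
  | zero => simp [cfracRec]
  | one =>
    simp only [cfracRec, prod_range_succ, sum_range_one, range_zero, prod_empty, one_mul]
    linear_combination hF 0
  | more k ih₀ ih₁ =>
    simp only [cfracRec, prod_range_succ, sum_range_succ, pow_add, map_mul] at ih₀ ih₁ ⊢
    linear_combination ih₁ - C (a k) * X ^ m k * ih₀ +
      C (∏ j ∈ range k, a j) * X ^ (∑ j ∈ range k, m j) * (∏ j ∈ range k, F j) * F k *
        C (a k) * X ^ m k * hF (k + 1)

/- `F 0` is given by the C-fraction with coefficients `a` and exponents `m`, and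
`c k = b_{k-1} + 1`, so that `m k = b_{k+1} - b_{k-1} = c (k + 2) - c k` and `d(b_k)` is the
determinant of `hankel (F 0) (c (k + 1))`. -/
section CFraction

variable {c : ℕ → ℕ}

theorem constantCoeff_eq_one_of_mul_one_sub (hm : ∀ k, 0 < m k)
    (hF : ∀ k, F k * (1 - C (a k) * X ^ m k * F (k + 1)) = 1) (k : ℕ) :
    constantCoeff (F k) = 1 := by
  simpa [constantCoeff_C_mul_X_pow_mul _ (hm k)] using congrArg constantCoeff (hF k)

theorem coeff_mul_cfracRec_of_le (hc : Monotone c) (hc1 : c 1 = 1)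
    (hcm : ∀ k, c (k + 2) = c k + m k)
    (hF : ∀ k, F k * (1 - C (a k) * X ^ m k * F (k + 1)) = 1) {k t : ℕ} (hkt : c k ≤ t) :
    coeff t (F 0 * cfracRec a m 1 1 k) =
      coeff t (C (∏ j ∈ range k, a j) * X ^ (∑ j ∈ range k, m j) * ∏ j ∈ range (k + 1), F j) := by
  have hnum : coeff t (cfracRec a m 0 1 k) = 0 :=
    coeff_cfracRec_eq_zero hc (fun k => (hcm k).ge) (by simp)
      (fun t ht => by rw [coeff_one, if_neg (by omega)]) k t hkt
  rw [← mul_cfracRec_sub_cfracRec hF, map_sub, hnum, sub_zero]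

theorem coeff_mul_cfracRec_eq_zero (hc : Monotone c) (hc1 : c 1 = 1)
    (hcm : ∀ k, c (k + 2) = c k + m k)
    (hF : ∀ k, F k * (1 - C (a k) * X ^ m k * F (k + 1)) = 1) {k t : ℕ} (hkt : c k ≤ t)
    (ht : t < ∑ j ∈ range k, m j) :
    coeff t (F 0 * cfracRec a m 1 1 k) = 0 := by
  rw [coeff_mul_cfracRec_of_le hc hc1 hcm hF hkt, coeff_C_mul_X_pow_mul, if_neg (by omega)]

theorem coeff_mul_cfracRec_sum (hc : Monotone c) (hc0 : c 0 = 0) (hc1 : c 1 = 1)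
    (hcm : ∀ k, c (k + 2) = c k + m k) (hm : ∀ k, 0 < m k)
    (hF : ∀ k, F k * (1 - C (a k) * X ^ m k * F (k + 1)) = 1) (k : ℕ) :
    coeff (∑ j ∈ range k, m j) (F 0 * cfracRec a m 1 1 k) = ∏ j ∈ range k, a j := by
  have hsum := sum_range_add_one_eq_add_apply_succ hc0 hc1 hcm k
  have hc1k : c 1 ≤ c (k + 1) := hc (by omega)
  rw [coeff_mul_cfracRec_of_le hc hc1 hcm hF (by omega), coeff_C_mul_X_pow_mul, if_pos le_rfl,
    Nat.sub_self, coeff_zero_eq_constantCoeff, map_prod,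
    prod_eq_one fun j _ => constantCoeff_eq_one_of_mul_one_sub hm hF j, mul_one]

theorem det_hankel_apply_succ_add (hc : Monotone c) (hc0 : c 0 = 0) (hc1 : c 1 = 1)
    (hcm : ∀ k, c (k + 2) = c k + m k) (hm : ∀ k, 0 < m k)
    (hF : ∀ k, F k * (1 - C (a k) * X ^ m k * F (k + 1)) = 1) {k β : ℕ}
    (hβ : c (k + 1) + β ≤ c (k + 2)) :
    (hankel (F 0) (c (k + 1) + β)).det = (hankel (F 0) (c (k + 1))).det *
      (hankel (mk fun n => coeff (2 * c (k + 1) + n) (F 0 * cfracRec a m 1 1 (k + 1))) β).det := by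
  refine det_hankel_add ?_ ?_ fun t hkt ht => ?_
  · rw [constantCoeff_cfracRec_succ hm, map_one]
  · intro s hs
    refine coeff_cfracRec_eq_zero (d := fun k => c k + 1) (fun i j hij => by simpa using hc hij)
      (fun k => by simp only [hcm]; omega) (fun t ht => ?_) (fun t ht => ?_) (k + 1) s hs <;>
    rw [coeff_one, if_neg (by omega)]
  · have : ∑ j ∈ range (k + 1), m j + 1 = c (k + 1) + c (k + 2) :=
      sum_range_add_one_eq_add_apply_succ hc0 hc1 hcm (k + 1)
    exact coeff_mul_cfracRec_eq_zero hc hc1 hcm hF hkt (by omega)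

theorem det_hankel_apply_add_two (hc : Monotone c) (hc0 : c 0 = 0) (hc1 : c 1 = 1)
    (hcm : ∀ k, c (k + 2) = c k + m k) (hm : ∀ k, 0 < m k)
    (hF : ∀ k, F k * (1 - C (a k) * X ^ m k * F (k + 1)) = 1) (k : ℕ) :
    (hankel (F 0) (c (k + 2))).det = (hankel (F 0) (c (k + 1))).det *
      ((-1) ^ (c (k + 2) - c (k + 1)).choose 2 *
        (∏ j ∈ range (k + 1), a j) ^ (c (k + 2) - c (k + 1))) := by
  have hsum : ∑ j ∈ range (k + 1), m j + 1 = c (k + 1) + c (k + 2) :=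
    sum_range_add_one_eq_add_apply_succ hc0 hc1 hcm (k + 1)
  obtain ⟨β, hβ⟩ := Nat.exists_eq_add_of_le (hc (by omega : k + 1 ≤ k + 2))
  rw [hβ, Nat.add_sub_cancel_left, det_hankel_apply_succ_add hc hc0 hc1 hcm hm hF hβ.ge]
  congr 1
  refine Matrix.det_of_eq_zero_above_antidiagonal _ _ (fun i j hij => ?_) (fun i j hij => ?_) <;>
    simp only [hankel, Matrix.of_apply, coeff_mk]
  · exact coeff_mul_cfracRec_eq_zero hc hc1 hcm hF (by omega) (by omega)
  · rw [← coeff_mul_cfracRec_sum hc hc0 hc1 hcm hm hF]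
    congr 2
    omega

theorem det_hankel_eq_zero_of_apply_succ_lt (hc : Monotone c) (hc0 : c 0 = 0) (hc1 : c 1 = 1)
    (hcm : ∀ k, c (k + 2) = c k + m k) (hm : ∀ k, 0 < m k)
    (hF : ∀ k, F k * (1 - C (a k) * X ^ m k * F (k + 1)) = 1) {k N : ℕ}
    (hkN : c (k + 1) < N) (hN : N < c (k + 2)) :
    (hankel (F 0) N).det = 0 := by
  have hsum : ∑ j ∈ range (k + 1), m j + 1 = c (k + 1) + c (k + 2) :=
    sum_range_add_one_eq_add_apply_succ hc0 hc1 hcm (k + 1)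
  obtain ⟨β, rfl⟩ := Nat.exists_eq_add_of_lt hkN
  rw [add_assoc, det_hankel_apply_succ_add hc hc0 hc1 hcm hm hF (by omega),
    Matrix.det_eq_zero_of_row_eq_zero (0 : Fin (β + 1)) fun j => ?_, mul_zero]
  simp only [hankel, Matrix.of_apply, coeff_mk]
  exact coeff_mul_cfracRec_eq_zero hc hc1 hcm hF (by omega) (by simp; omega)

theorem det_hankel_apply_succ (hc : Monotone c) (hc0 : c 0 = 0) (hc1 : c 1 = 1)
    (hcm : ∀ k, c (k + 2) = c k + m k) (hm : ∀ k, 0 < m k)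
    (hF : ∀ k, F k * (1 - C (a k) * X ^ m k * F (k + 1)) = 1) (k : ℕ) :
    (hankel (F 0) (c (k + 1))).det =
      (-1) ^ (∑ j ∈ range k, (c (j + 2) - c (j + 1)).choose 2) *
        ∏ j ∈ range k, a j ^ (c (k + 1) - c (j + 1)) := by
  induction k with
  | zero =>
    rw [zero_add, hc1]
    simp [hankel, constantCoeff_eq_one_of_mul_one_sub hm hF 0]
  | succ k ih =>
    rw [det_hankel_apply_add_two hc hc0 hc1 hcm hm hF, ih, sum_range_succ, pow_add,
      prod_range_succ_pow_sub a (c := fun j => c (j + 1)) (fun i j hij => hc (by omega))]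
    ring

theorem det_hankel_eq_zero_of_forall_ne (hc : Monotone c) (hc0 : c 0 = 0) (hc1 : c 1 = 1)
    (hcm : ∀ k, c (k + 2) = c k + m k) (hm : ∀ k, 0 < m k)
    (hF : ∀ k, F k * (1 - C (a k) * X ^ m k * F (k + 1)) = 1) {N : ℕ} (hN : ∀ k, N ≠ c k) :
    (hankel (F 0) N).det = 0 := by
  have hc2 : ∀ k, c k < c (k + 2) := fun k => by have := hm k; have := hcm k; omega
  obtain ⟨_ | k, hk, hNk⟩ := exists_apply_le_lt_apply_succ (hc0 ▸ N.zero_le)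
    ⟨2 * (N + 1), self_le_apply_two_mul hc2 (N + 1)⟩
  · rw [zero_add, hc1] at hNk
    exact absurd (by omega) (hN 0)
  · exact det_hankel_eq_zero_of_apply_succ_lt hc hc0 hc1 hcm hm hF
      (lt_of_le_of_ne hk (hN _).symm) hNk

end CFraction

end PowerSeries

def cfracIndex (b : ℤ → ℤ) (k : ℕ) : ℕ := (b (k - 1) + 1).toNat

section cfracIndex

variable {b : ℤ → ℤ}

theorem cfracIndex_zero (hbneg : b (-1) = -1) : cfracIndex b 0 = 0 := by
  simp [cfracIndex, hbneg]

theorem cfracIndex_one (hb0 : b 0 = 0) : cfracIndex b 1 = 1 := by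
  simp [cfracIndex, hb0]

theorem cfracIndex_succ (hb0 : b 0 = 0) (hb : MonotoneOn b (Set.Ici (-1))) (k : ℕ) :
    cfracIndex b (k + 1) = (b k).toNat + 1 := by
  have : b 0 ≤ b k := hb (Set.mem_Ici.2 (by omega)) (Set.mem_Ici.2 (by omega)) (by omega)
  simp only [cfracIndex, Nat.cast_add, Nat.cast_one, add_sub_cancel_right]
  omega

theorem monotone_cfracIndex (hb : MonotoneOn b (Set.Ici (-1))) : Monotone (cfracIndex b) :=
  fun j k hjk => by
    have : b (j - 1) ≤ b (k - 1) :=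
      hb (Set.mem_Ici.2 (by omega)) (Set.mem_Ici.2 (by omega)) (by omega)
    simp only [cfracIndex]
    omega

theorem cfracIndex_succ_sub_cfracIndex_succ (hb0 : b 0 = 0) (hb : MonotoneOn b (Set.Ici (-1)))
    {j k : ℕ} (hjk : j ≤ k) : cfracIndex b (k + 1) - cfracIndex b (j + 1) = (b k - b j).toNat := by
  have h₀ : b 0 ≤ b j := hb (Set.mem_Ici.2 (by omega)) (Set.mem_Ici.2 (by omega)) (by omega)
  have h₁ : b j ≤ b k := hb (Set.mem_Ici.2 (by omega)) (Set.mem_Ici.2 (by omega)) (by omega)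
  rw [cfracIndex_succ hb0 hb, cfracIndex_succ hb0 hb]
  omega

theorem cfracIndex_add_two (hbneg : b (-1) = -1) (hb : MonotoneOn b (Set.Ici (-1))) (k : ℕ) :
    cfracIndex b (k + 2) = cfracIndex b k + (b (k + 1) - b (k - 1)).toNat := by
  have h₁ : b (-1) ≤ b (k - 1) := hb (Set.mem_Ici.2 le_rfl) (Set.mem_Ici.2 (by omega)) (by omega)
  have h₂ : b (k - 1) ≤ b (k + 1) :=
    hb (Set.mem_Ici.2 (by omega)) (Set.mem_Ici.2 (by omega)) (by omega)
  simp only [cfracIndex, Nat.cast_add, Nat.cast_ofNat, show (k : ℤ) + 2 - 1 = k + 1 by ring]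
  omega

end cfracIndex

theorem buslaev_hankel_determinants_general {K : Type*} [Field K] (a : ℕ → K)
    (b : ℤ → ℤ)
    (hbneg : b (-1) = -1) (hb0 : b 0 = 0)
    (hmono : ∀ k : ℤ, -1 ≤ k → b k ≤ b (k + 1))
    (hgap : ∀ k : ℤ, -1 ≤ k → 1 ≤ b (k + 2) - b k)
    (f : PowerSeries K) (F : ℕ → PowerSeries K) (hF0 : F 0 = f)
    (hF : ∀ k : ℕ, F k * (1 - PowerSeries.C (a k) *
      PowerSeries.X ^ (b ((k : ℤ) + 1) - b ((k : ℤ) - 1)).toNat * F (k + 1)) = 1) :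
    (∀ k : ℕ,
      Matrix.det (Matrix.of fun i j : Fin ((b (k : ℤ)).toNat + 1) =>
          PowerSeries.coeff ((i : ℕ) + (j : ℕ)) f) =
        (-1) ^ (∑ j ∈ Finset.range k, Nat.choose (b ((j : ℤ) + 1) - b (j : ℤ)).toNat 2) *
          ∏ j ∈ Finset.range k, a j ^ (b (k : ℤ) - b (j : ℤ)).toNat) ∧
    (∀ n : ℕ, 0 < n → (∀ k : ℕ, (n : ℤ) ≠ b (k : ℤ)) →
      Matrix.det (Matrix.of fun i j : Fin (n + 1) =>
        PowerSeries.coeff ((i : ℕ) + (j : ℕ)) f) = 0) := by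
  have hb : MonotoneOn b (Set.Ici (-1)) :=
    monotoneOn_of_le_add_one Set.ordConnected_Ici fun k _ hk _ => hmono k hk
  have hm : ∀ k : ℕ, 0 < (b (k + 1) - b (k - 1)).toNat := fun k => by
    have := hgap (k - 1) (by omega)
    rw [show (k : ℤ) - 1 + 2 = k + 1 by ring] at this
    omega
  have hc := monotone_cfracIndex hb
  have hc0 := cfracIndex_zero hbneg
  have hc1 := cfracIndex_one hb0
  have hcm := cfracIndex_add_two hbneg hb
  subst hF0
  refine ⟨fun k => ?_, fun n _ hn => det_hankel_eq_zero_of_forall_ne hc hc0 hc1 hcm hm hF ?_⟩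
  · rw [← cfracIndex_succ hb0 hb]
    refine (det_hankel_apply_succ hc hc0 hc1 hcm hm hF k).trans ?_
    congr 1
    · refine congrArg _ (sum_congr rfl fun j _ => ?_)
      simpa using congrArg (Nat.choose · 2)
        (cfracIndex_succ_sub_cfracIndex_succ hb0 hb (Nat.le_succ j))
    · refine prod_congr rfl fun j hj => ?_
      rw [cfracIndex_succ_sub_cfracIndex_succ hb0 hb (mem_range.1 hj).le]
  · rintro (_ | k) h
    · omega
    · have := hn k
      rw [cfracIndex_succ hb0 hb] at h
      omega

/-- (Buslaev's theorem) If `f` is given by the C-fraction with nonzero coefficients `a_k`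
and exponents `b_{k+1} − b_{k−1}`, then the Hankel determinants `d(n)` satisfy
`d(b_k) = (−1)^{Σ_j C(b_{j+1}−b_j, 2)} a₀^{b_k−b₀} ⋯ a_{k−1}^{b_k−b_{k−1}}`, and
`d(n) = 0` for every `n > 0` not of the form `b_k`. -/
theorem buslaev_hankel_determinants {K : Type*} [Field K] (a : ℕ → K)
    (ha : ∀ k : ℕ, a k ≠ 0) (b : ℤ → ℤ)
    (hbneg : b (-1) = -1) (hb0 : b 0 = 0)
    (hmono : ∀ k : ℤ, -1 ≤ k → b k ≤ b (k + 1))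
    (hgap : ∀ k : ℤ, -1 ≤ k → 1 ≤ b (k + 2) - b k)
    (f : PowerSeries K) (F : ℕ → PowerSeries K) (hF0 : F 0 = f)
    (hF : ∀ k : ℕ, F k * (1 - PowerSeries.C (a k) *
      PowerSeries.X ^ (b ((k : ℤ) + 1) - b ((k : ℤ) - 1)).toNat * F (k + 1)) = 1) :
    (∀ k : ℕ,
      Matrix.det (Matrix.of fun i j : Fin ((b (k : ℤ)).toNat + 1) =>
          PowerSeries.coeff ((i : ℕ) + (j : ℕ)) f) =
        (-1) ^ (∑ j ∈ Finset.range k, Nat.choose (b ((j : ℤ) + 1) - b (j : ℤ)).toNat 2) *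
          ∏ j ∈ Finset.range k, a j ^ (b (k : ℤ) - b (j : ℤ)).toNat) ∧
    (∀ n : ℕ, 0 < n → (∀ k : ℕ, (n : ℤ) ≠ b (k : ℤ)) →
      Matrix.det (Matrix.of fun i j : Fin (n + 1) =>
        PowerSeries.coeff ((i : ℕ) + (j : ℕ)) f) = 0) :=
  buslaev_hankel_determinants_general a b hbneg hb0 hmono hgap f F hF0 hF
end

section
/- Let K be a field, (a_k)_{k≥0} a sequence in K with a_k ≠ 0 for all k, and (b_k)_{k≥−1} a nondecreasing sequence of integers with b_{−1} = −1, b_0 = 0 and b_{k+2} − b_k ≥ 1 for all k ≥ −1. Suppose f = ∑_{n≥0} f_n x^n is given by the C-fraction with coefficients (a_k) and exponents b_{k+1} − b_{k−1}, i.e. there exist formal power series (F^{(k)}) with F^{(0)} = f and F^{(k)} · (1 − a_k x^{b_{k+1}−b_{k−1}} F^{(k+1)}) = 1. Let d(n) = det(f_{i+j})_{i,j=0}^{n}, let r_k(x) be the polynomials defined by r_0 = 1, r_1 = x, r_k = x^{b_{k−1}−b_{k−2}} r_{k−1} − a_{k−2} r_{k−2} for k ≥ 2, let p_0(x) = 1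 and for n ≥ 1 let p_n(x) = det of the (n+1)×(n+1) matrix whose entry in row i and column j is f_{i+j} for 0 ≤ j ≤ n−1 and x^i for j = n (0 ≤ i ≤ n). Let (B_n)_{n≥0} be the distinct elements of {b_k : k ≥ −1} listed in increasing order. Then: (i) for each n, if k is the largest index such that b_{k−1} = B_n, then p_{B_n+1}(x) = d(B_n) · r_k(x); (ii) p_m(x) = 0 for every m with B_n + 1 < m < B_{n+1} − 1. -/
open Polynomial Matrix Finset
open scoped PowerSeries

/-!
Let `G_k = cfDenom` be the denominator of the `k`-th convergent of the C-fraction; then `r_k` is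
its reversal at degree `D k = b_{k-1} + 1`. The convergent approximates `f` to order
`b_k + b_{k-1} + 1`, and reading this off at the right coefficients says that `r_k` is monic of
degree `D k` and annihilates the Hankel rows `s < b_k`: `∑ᵢ (r_k)ᵢ f_{i+s} = 0`. For (i), adding
this combination of the rows of the bordered matrix to its last row leaves `(0, …, 0, r_k)`,
whence `p_{D k} = d(D k - 1) · r_k`. For (ii), when `D k < m < b_k`, the same combination of the
first `D k + 1` columns vanishes, so `p_m = 0`.
-/

section

variable {R : Type*} [CommRing R]

noncomputable def cfDenom (a : ℕ → R) (E : ℕ → ℕ) : ℕ → R[X]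
  | 0 => 1
  | 1 => 1
  | k + 2 => cfDenom a E (k + 1) - C (a k) * X ^ E k * cfDenom a E k

noncomputable def cfNumer (a : ℕ → R) (E : ℕ → ℕ) : ℕ → R[X]
  | 0 => 0
  | 1 => 1
  | k + 2 => cfNumer a E (k + 1) - C (a k) * X ^ E k * cfNumer a E k

variable {a : ℕ → R} {E : ℕ → ℕ}

theorem cfDenom_mul_sub_cfNumer_succ {f : R⟦X⟧} {F : ℕ → R⟦X⟧} (hF0 : F 0 = f)
    (hF : ∀ k, F k * (1 - PowerSeries.C (a k) * PowerSeries.X ^ E k * F (k + 1)) = 1) (k : ℕ) :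
    (cfDenom a E (k + 1) : R⟦X⟧) * f - (cfNumer a E (k + 1) : R⟦X⟧) =
      PowerSeries.C (a k) * PowerSeries.X ^ E k * F (k + 1) *
        ((cfDenom a E k : R⟦X⟧) * f - (cfNumer a E k : R⟦X⟧)) := by
  induction k with
  | zero =>
    subst hF0
    simp only [cfDenom, cfNumer, Polynomial.coe_one, Polynomial.coe_zero]
    linear_combination hF 0
  | succ k ih =>
    simp only [cfDenom, cfNumer, Polynomial.coe_sub, Polynomial.coe_mul, Polynomial.coe_C,
      Polynomial.coe_pow, Polynomial.coe_X]
    linear_combination (1 - PowerSeries.C (a (k + 1)) * PowerSeries.X ^ E (k + 1) * F (k + 2)) * ih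
      + PowerSeries.C (a k) * PowerSeries.X ^ E k *
        ((cfDenom a E k : R⟦X⟧) * f - (cfNumer a E k : R⟦X⟧)) * hF (k + 1)

theorem X_pow_dvd_cfDenom_mul_sub_cfNumer {f : R⟦X⟧} {F : ℕ → R⟦X⟧} (hF0 : F 0 = f)
    (hF : ∀ k, F k * (1 - PowerSeries.C (a k) * PowerSeries.X ^ E k * F (k + 1)) = 1) (k : ℕ) :
    PowerSeries.X ^ (∑ i ∈ range (k + 1), E i) ∣
      (cfDenom a E (k + 1) : R⟦X⟧) * f - (cfNumer a E (k + 1) : R⟦X⟧) := by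
  induction k with
  | zero =>
    rw [cfDenom_mul_sub_cfNumer_succ hF0 hF, sum_range_one]
    exact dvd_mul_of_dvd_left (dvd_mul_of_dvd_left (dvd_mul_left _ _) _) _
  | succ k ih =>
    rw [cfDenom_mul_sub_cfNumer_succ hF0 hF, sum_range_succ, add_comm, pow_add]
    exact mul_dvd_mul (dvd_mul_of_dvd_left (dvd_mul_left _ _) _) ih

theorem natDegree_cfDenom_le {D : ℕ → ℕ} (hD : Monotone D) (hE : ∀ k, E k + D k = D (k + 2))
    (k : ℕ) : (cfDenom a E k).natDegree ≤ D k := by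
  induction k using Nat.strong_induction_on with
  | _ k ih =>
    match k with
    | 0 | 1 => simp [cfDenom]
    | k + 2 =>
      rw [cfDenom]
      refine (natDegree_sub_le _ _).trans (max_le ((ih (k + 1) (by omega)).trans (hD (by omega)))
        (natDegree_mul_le.trans ?_))
      have := natDegree_C_mul_X_pow_le (a k) (E k)
      have := ih k (by omega)
      have := hE k
      omega

theorem coeff_cfNumer_eq_zero {D : ℕ → ℕ} (hD : Monotone D) (hD1 : 1 ≤ D 1)
    (hE : ∀ k, E k + D k = D (k + 2)) {k u : ℕ} (hu : D k ≤ u) : (cfNumer a E k).coeff u = 0 := by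
  induction k using Nat.strong_induction_on generalizing u with
  | _ k ih =>
    match k with
    | 0 => simp [cfNumer]
    | 1 => simp [cfNumer, coeff_one]; omega
    | k + 2 =>
      rw [cfNumer, coeff_sub, ih (k + 1) (by omega) ((hD (by omega)).trans hu), mul_assoc,
        coeff_C_mul, coeff_X_pow_mul']
      split_ifs with h
      · rw [ih k (by omega) (by have := hE k; omega), mul_zero, sub_zero]
      · simp

theorem coeff_cfDenom_zero (hE : ∀ k, E k ≠ 0) (k : ℕ) : (cfDenom a E k).coeff 0 = 1 := by
  induction k using Nat.strong_induction_on with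
  | _ k ih =>
    match k with
    | 0 | 1 => simp [cfDenom]
    | k + 2 =>
      rw [cfDenom, coeff_sub, ih (k + 1) (by omega), mul_assoc, coeff_C_mul, coeff_X_pow_mul',
        if_neg (Nat.pos_of_ne_zero (hE k)).not_ge, mul_zero, sub_zero]

theorem eq_reflect_cfDenom {D δ : ℕ → ℕ} (hD : Monotone D) (hE : ∀ k, E k + D k = D (k + 2))
    (hδ : ∀ k, δ k + D (k + 1) = D (k + 2)) {r : ℕ → R[X]} (hr0 : r 0 = X ^ D 0)
    (hr1 : r 1 = X ^ D 1) (hrec : ∀ k, r (k + 2) = X ^ δ k * r (k + 1) - C (a k) * r k) (k : ℕ) :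
    r k = reflect (D k) (cfDenom a E k) := by
  induction k using Nat.strong_induction_on with
  | _ k ih =>
    match k with
    | 0 => simp [hr0, cfDenom]
    | 1 => simp [hr1, cfDenom]
    | k + 2 =>
      have h₁ := reflect_mul 1 (cfDenom a E (k + 1)) (natDegree_one.trans_le (Nat.zero_le (δ k)))
        (natDegree_cfDenom_le hD hE _)
      rw [one_mul, reflect_one, hδ] at h₁
      have h₂ : reflect (D (k + 2)) (X ^ E k * cfDenom a E k) = reflect (D k) (cfDenom a E k) := by
        rw [← hE, reflect_mul _ _ (natDegree_X_pow_le _) (natDegree_cfDenom_le hD hE _),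
          reflect_monomial, revAt_le le_rfl, Nat.sub_self, pow_zero, one_mul]
      rw [hrec, ih (k + 1) (by omega), ih k (by omega), cfDenom, reflect_sub, mul_assoc,
        reflect_C_mul, h₁, h₂]

theorem natDegree_reflect_cfDenom_le {D : ℕ → ℕ} (hD : Monotone D)
    (hE : ∀ k, E k + D k = D (k + 2)) (k : ℕ) : (reflect (D k) (cfDenom a E k)).natDegree ≤ D k :=
  natDegree_reflect_le.trans (max_le le_rfl (natDegree_cfDenom_le hD hE k))

theorem coeff_reflect_cfDenom_self (hE : ∀ k, E k ≠ 0) (D : ℕ → ℕ) (k : ℕ) :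
    (reflect (D k) (cfDenom a E k)).coeff (D k) = 1 := by
  rw [coeff_reflect, revAt_le le_rfl, Nat.sub_self, coeff_cfDenom_zero hE]

noncomputable def hankelPairing (h : ℕ → R) (s : ℕ) (q : R[X]) : R :=
  q.sum fun i c => c * h (i + s)

theorem hankelPairing_eq_sum_fin {h : ℕ → R} {q : R[X]} {n : ℕ} (hq : q.natDegree < n) (s : ℕ) :
    hankelPairing h s q = ∑ i : Fin n, q.coeff i * h (i + s) := by
  rw [hankelPairing, sum_over_range' (f := fun i c => c * h (i + s)) _ (fun _ => zero_mul _) n hq,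
    Fin.sum_univ_eq_sum_range (fun i => q.coeff i * h (i + s))]

theorem hankelPairing_reflect {f : R⟦X⟧} {G : R[X]} {N : ℕ} (hG : G.natDegree ≤ N) (s : ℕ) :
    hankelPairing (fun n => PowerSeries.coeff n f) s (reflect N G) =
      PowerSeries.coeff (N + s) ((G : R⟦X⟧) * f) := by
  have hdeg : (reflect N G).natDegree < N + 1 :=
    natDegree_reflect_le.trans_lt (by rw [max_eq_left hG]; omega)
  rw [hankelPairing, sum_over_range' (f := fun i c => c * PowerSeries.coeff (i + s) f) _
    (fun _ => zero_mul _) _ hdeg, ← sum_range_reflect,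
    PowerSeries.coeff_mul, Nat.sum_antidiagonal_eq_sum_range_succ
      (fun i j => PowerSeries.coeff i (G : R⟦X⟧) * PowerSeries.coeff j f)]
  rw [← sum_subset (range_subset_range.mpr (by omega : N + 1 ≤ (N + s).succ))]
  · refine sum_congr rfl fun i hi => ?_
    rw [mem_range] at hi
    rw [coeff_coe, coeff_reflect, revAt_le (show N + 1 - 1 - i ≤ N by omega),
      show N - (N + 1 - 1 - i) = i by omega, show N + 1 - 1 - i + s = N + s - i by omega]
  · intro i _ hi
    rw [mem_range, not_lt] at hi
    rw [coeff_coe, coeff_eq_zero_of_natDegree_lt (by omega), zero_mul]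

theorem hankelPairing_reflect_cfDenom_eq_zero {f : R⟦X⟧} {F : ℕ → R⟦X⟧} (hF0 : F 0 = f)
    (hF : ∀ k, F k * (1 - PowerSeries.C (a k) * PowerSeries.X ^ E k * F (k + 1)) = 1)
    {D : ℕ → ℕ} (hD : Monotone D) (hD0 : D 0 = 0) (hD1 : D 1 = 1)
    (hE : ∀ k, E k + D k = D (k + 2)) {k s : ℕ} (hs : s + 1 < D (k + 1)) :
    hankelPairing (fun n => PowerSeries.coeff n f) s (reflect (D k) (cfDenom a E k)) = 0 := by
  obtain _ | k := k
  · rw [zero_add, hD1] at hs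
    omega
  have htelescope : ∀ j, ∑ i ∈ range j, E i + D 0 + D 1 = D j + D (j + 1) := by
    intro j
    induction j with
    | zero => simp
    | succ j ih =>
      have : E j + D j = D (j + 1 + 1) := hE j
      rw [sum_range_succ]
      omega
  have hcoeff := PowerSeries.X_pow_dvd_iff.mp (X_pow_dvd_cfDenom_mul_sub_cfNumer hF0 hF k)
    (D (k + 1) + s) (by have := htelescope (k + 1); omega)
  rw [map_sub, sub_eq_zero, coeff_coe, coeff_cfNumer_eq_zero hD (by omega) hE (by omega)] at hcoeff
  rw [hankelPairing_reflect (natDegree_cfDenom_le hD hE _), hcoeff]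

def hankelMatrix (h : ℕ → R) (n : ℕ) : Matrix (Fin n) (Fin n) R :=
  of fun i j => h (i + j)

noncomputable def borderedHankelMatrix (h : ℕ → R) (n : ℕ) :
    Matrix (Fin (n + 1)) (Fin (n + 1)) R[X] :=
  of fun i j => if (j : ℕ) = n then X ^ (i : ℕ) else C (h (i + j))

theorem vecMul_borderedHankelMatrix {h : ℕ → R} {q : R[X]} {n : ℕ} (hq : q.natDegree ≤ n)
    (horth : ∀ s < n, hankelPairing h s q = 0) :
    (fun i : Fin (n + 1) => C (q.coeff i)) ᵥ* borderedHankelMatrix h n =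
      Pi.single (Fin.last n) q := by
  funext j
  rw [vecMul, dotProduct]
  by_cases hj : j = Fin.last n
  · subst hj
    simp only [borderedHankelMatrix, of_apply, Fin.val_last, if_true, Pi.single_eq_same]
    rw [Fin.sum_univ_eq_sum_range (fun i => C (q.coeff i) * X ^ i)]
    conv_rhs => rw [as_sum_range' q (n + 1) (by omega)]
    simp only [C_mul_X_pow_eq_monomial]
  · have hjn : (j : ℕ) ≠ n := fun h => hj (Fin.ext h)
    simp only [borderedHankelMatrix, of_apply, hjn, if_false, Pi.single_eq_of_ne hj, ← map_mul,
      ← map_sum]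
    rw [← hankelPairing_eq_sum_fin (by omega), horth _ (by omega), map_zero]

theorem det_borderedHankelMatrix_of_orthogonal {h : ℕ → R} {q : R[X]} {n : ℕ}
    (hq : q.natDegree ≤ n) (hlead : q.coeff n = 1) (horth : ∀ s < n, hankelPairing h s q = 0) :
    det (borderedHankelMatrix h n) = C (det (hankelMatrix h n)) * q := by
  set M := borderedHankelMatrix h n
  have hrow : det (M.updateRow (Fin.last n) (Pi.single (Fin.last n) q)) = det M := by
    rw [← vecMul_borderedHankelMatrix hq horth, vecMul_eq_sum, det_updateRow_sum]
    simp [hlead]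
  have hminor : M.submatrix (Fin.last n).succAbove (Fin.last n).succAbove =
      (C : R →+* R[X]).mapMatrix (hankelMatrix h n) := by
    refine Matrix.ext fun i j => ?_
    simp [M, borderedHankelMatrix, hankelMatrix, j.is_lt.ne]
  have hsingle : Pi.single (Fin.last n) q = q • Pi.single (Fin.last n) (1 : R[X]) := by
    rw [← Pi.single_smul, smul_eq_mul, mul_one]
  rw [← hrow, hsingle, det_updateRow_smul, ← adjugate_apply, adjugate_fin_succ_eq_det_submatrix,
    hminor, ← RingHom.map_det, Fin.val_last, (Even.add_self n).neg_one_pow, one_mul, mul_comm]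

theorem det_borderedHankelMatrix_eq_zero [IsDomain R] {h : ℕ → R} {q : R[X]} (hq0 : q ≠ 0)
    {n : ℕ} (hq : q.natDegree < n) (horth : ∀ s ≤ n, hankelPairing h s q = 0) :
    det (borderedHankelMatrix h n) = 0 := by
  refine exists_mulVec_eq_zero_iff.mp ⟨fun j => C (q.coeff j), fun hv => ?_, ?_⟩
  · have := congrFun hv ⟨q.natDegree, by omega⟩
    simp_all
  · have hentry : ∀ i x : Fin (n + 1),
        borderedHankelMatrix h n i x * C (q.coeff x) = C (q.coeff x * h (x + i)) := by
      intro i x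
      by_cases hx : (x : ℕ) = n
      · simp [borderedHankelMatrix, hx, coeff_eq_zero_of_natDegree_lt hq]
      · simp [borderedHankelMatrix, hx, add_comm, mul_comm]
    funext i
    rw [mulVec, dotProduct, Fintype.sum_congr _ _ (hentry i), ← map_sum,
      ← hankelPairing_eq_sum_fin (by omega), horth i (by omega), map_zero, Pi.zero_apply]

end

def degSeq (b : ℤ → ℤ) (k : ℕ) : ℕ := (b (k - 1) + 1).toNat

section DegreeSequence

variable {b : ℤ → ℤ}

theorem natCast_degSeq (hbneg : b (-1) = -1) (hmono : ∀ k : ℤ, -1 ≤ k → b k ≤ b (k + 1))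
    (k : ℕ) : (degSeq b k : ℤ) = b (k - 1) + 1 := by
  suffices -1 ≤ b (k - 1) by rw [degSeq, Int.toNat_of_nonneg (by omega)]
  induction k with
  | zero => simp [hbneg]
  | succ k ih =>
    have := hmono (k - 1) (by omega)
    rw [sub_add_cancel] at this
    push_cast
    rw [add_sub_cancel_right]
    omega

theorem natCast_degSeq_succ (hbneg : b (-1) = -1) (hmono : ∀ k : ℤ, -1 ≤ k → b k ≤ b (k + 1))
    (k : ℕ) : (degSeq b (k + 1) : ℤ) = b k + 1 := by
  rw [natCast_degSeq hbneg hmono]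
  push_cast
  rw [add_sub_cancel_right]

theorem degSeq_zero (hbneg : b (-1) = -1) : degSeq b 0 = 0 := by
  simp [degSeq, hbneg]

theorem degSeq_one (hb0 : b 0 = 0) : degSeq b 1 = 1 := by
  simp [degSeq, hb0]

theorem monotone_degSeq (hmono : ∀ k : ℤ, -1 ≤ k → b k ≤ b (k + 1)) : Monotone (degSeq b) :=
  monotone_nat_of_le_succ fun k => by
    have := hmono (k - 1) (by omega)
    simp only [degSeq, sub_add_cancel, Nat.cast_add, Nat.cast_one, add_sub_cancel_right] at this ⊢
    omega

theorem degSeq_lt_add_two (hbneg : b (-1) = -1) (hmono : ∀ k : ℤ, -1 ≤ k → b k ≤ b (k + 1))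
    (hgap : ∀ k : ℤ, -1 ≤ k → 1 ≤ b (k + 2) - b k) (k : ℕ) : degSeq b k < degSeq b (k + 2) := by
  have := hgap (k - 1) (by omega)
  rw [show (k : ℤ) - 1 + 2 = k + 1 by ring] at this
  have := natCast_degSeq hbneg hmono k
  have : (degSeq b (k + 2) : ℤ) = b (k + 1) + 1 := natCast_degSeq_succ hbneg hmono (k + 1)
  omega

theorem toNat_sub_add_degSeq (hbneg : b (-1) = -1) (hmono : ∀ k : ℤ, -1 ≤ k → b k ≤ b (k + 1))
    (k : ℕ) : (b (k + 1) - b (k - 1)).toNat + degSeq b k = degSeq b (k + 2) := by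
  have := natCast_degSeq hbneg hmono k
  have : (degSeq b (k + 2) : ℤ) = b (k + 1) + 1 := natCast_degSeq_succ hbneg hmono (k + 1)
  have := hmono (k - 1) (by omega)
  have := hmono k (by omega)
  rw [sub_add_cancel] at *
  omega

theorem toNat_sub_add_degSeq_succ (hbneg : b (-1) = -1)
    (hmono : ∀ k : ℤ, -1 ≤ k → b k ≤ b (k + 1)) (k : ℕ) :
    (b (k + 1) - b k).toNat + degSeq b (k + 1) = degSeq b (k + 2) := by
  have := natCast_degSeq_succ hbneg hmono k
  have : (degSeq b (k + 2) : ℤ) = b (k + 1) + 1 := natCast_degSeq_succ hbneg hmono (k + 1)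
  have := hmono k (by omega)
  omega

theorem degSeq_lt_succ (hbneg : b (-1) = -1) (hmono : ∀ k : ℤ, -1 ≤ k → b k ≤ b (k + 1))
    {k : ℕ} (hk : b (k - 1) < b k) : degSeq b k < degSeq b (k + 1) := by
  have := natCast_degSeq hbneg hmono k
  have := natCast_degSeq_succ hbneg hmono k
  omega

end DegreeSequence

theorem exists_eq_lt_succ_of_monotone {D : ℕ → ℕ} (hD : Monotone D) (hgap : ∀ k, D k < D (k + 2))
    (j : ℕ) : ∃ k, D k = D j ∧ D j < D (k + 1) := by
  have hunb : ∃ k, D j < D k := by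
    have hmono2 : StrictMono fun i => D (2 * i) := strictMono_nat_of_lt_succ fun i => hgap (2 * i)
    exact ⟨2 * (D j + 1), (hmono2.id_le (D j + 1))⟩
  obtain ⟨k, hk⟩ : ∃ k, Nat.find hunb = k + 1 := Nat.exists_eq_add_one.mpr <|
    Nat.pos_of_ne_zero fun h0 => by
      have := Nat.find_spec hunb
      rw [h0] at this
      exact absurd (hD (Nat.zero_le j)) (not_le.mpr this)
  have hlt : D j < D (k + 1) := hk ▸ Nat.find_spec hunb
  have hle : D k ≤ D j := not_lt.mp (Nat.find_min hunb (by omega))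
  have hjk : j ≤ k := by
    by_contra! h
    exact absurd (hD h) (not_le.mpr hlt)
  exact ⟨k, le_antisymm hle (hD hjk), hlt⟩

theorem exists_degSeq_eq_and_le {b : ℤ → ℤ} (hbneg : b (-1) = -1)
    (hmono : ∀ k : ℤ, -1 ≤ k → b k ≤ b (k + 1)) (hgap : ∀ k : ℤ, -1 ≤ k → 1 ≤ b (k + 2) - b k)
    {B : ℕ → ℤ} (hBmono : StrictMono B)
    (hBrange : Set.range B = {v : ℤ | ∃ k : ℤ, -1 ≤ k ∧ b k = v})
    (n : ℕ) : ∃ k, (degSeq b k : ℤ) = B n + 1 ∧ B (n + 1) + 1 ≤ degSeq b (k + 1) := by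
  obtain ⟨κ, hκ, hbκ⟩ : ∃ κ : ℤ, -1 ≤ κ ∧ b κ = B n := hBrange.subset (Set.mem_range_self n)
  obtain ⟨j, rfl⟩ : ∃ j : ℕ, κ = j - 1 := ⟨(κ + 1).toNat, by omega⟩
  obtain ⟨k, hkj, hlt⟩ := exists_eq_lt_succ_of_monotone (monotone_degSeq hmono)
    (degSeq_lt_add_two hbneg hmono hgap) j
  have hj := natCast_degSeq hbneg hmono j
  have hk := natCast_degSeq_succ hbneg hmono k
  obtain ⟨m, hm⟩ : b k ∈ Set.range B := hBrange.symm.subset ⟨k, by omega, rfl⟩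
  have hnm : n < m := hBmono.lt_iff_lt.mp (by zify at hlt; omega)
  refine ⟨k, by rw [hkj, hj, hbκ], ?_⟩
  have := hBmono.monotone (show n + 1 ≤ m by omega)
  omega

theorem bordered_hankel_polynomials_general {K : Type*} [Field K] (a : ℕ → K)
    (b : ℤ → ℤ)
    (hbneg : b (-1) = -1) (hb0 : b 0 = 0)
    (hmono : ∀ k : ℤ, -1 ≤ k → b k ≤ b (k + 1))
    (hgap : ∀ k : ℤ, -1 ≤ k → 1 ≤ b (k + 2) - b k)
    (f : PowerSeries K) (F : ℕ → PowerSeries K) (hF0 : F 0 = f)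
    (hF : ∀ k : ℕ, F k * (1 - PowerSeries.C (a k) *
      PowerSeries.X ^ (b ((k : ℤ) + 1) - b ((k : ℤ) - 1)).toNat * F (k + 1)) = 1)
    (r : ℕ → Polynomial K)
    (hr0 : r 0 = 1) (hr1 : r 1 = Polynomial.X)
    (hrrec : ∀ k : ℕ, r (k + 2) =
      Polynomial.X ^ (b ((k : ℤ) + 1) - b (k : ℤ)).toNat * r (k + 1) -
        Polynomial.C (a k) * r k)
    (p : ℕ → Polynomial K) (hp0 : p 0 = 1)
    (hp : ∀ n : ℕ, p (n + 1) =
      Matrix.det (Matrix.of fun i j : Fin (n + 2) =>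
        if (j : ℕ) = n + 1 then Polynomial.X ^ (i : ℕ)
        else Polynomial.C (PowerSeries.coeff ((i : ℕ) + (j : ℕ)) f)))
    (B : ℕ → ℤ) (hBmono : StrictMono B)
    (hBrange : Set.range B = {v : ℤ | ∃ k : ℤ, -1 ≤ k ∧ b k = v}) :
    (∀ n k : ℕ, b ((k : ℤ) - 1) = B n → B n < b (k : ℤ) →
      p ((B n + 1).toNat) =
        Polynomial.C (Matrix.det (Matrix.of fun i j : Fin ((B n + 1).toNat) =>
          PowerSeries.coeff ((i : ℕ) + (j : ℕ)) f)) * r k) ∧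
    (∀ n m : ℕ, B n + 1 < (m : ℤ) → (m : ℤ) < B (n + 1) - 1 → p m = 0) := by
  set D := degSeq b
  set E : ℕ → ℕ := fun k => (b (k + 1) - b (k - 1)).toNat
  have hE : ∀ k, E k + D k = D (k + 2) := toNat_sub_add_degSeq hbneg hmono
  have hE0 : ∀ k, E k ≠ 0 := fun k => by
    have : D k < D (k + 2) := degSeq_lt_add_two hbneg hmono hgap k
    have := hE k
    omega
  have hD : Monotone D := monotone_degSeq hmono
  have hD0 : D 0 = 0 := degSeq_zero hbneg
  have hD1 : D 1 = 1 := degSeq_one hb0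
  have hr : ∀ k, r k = reflect (D k) (cfDenom a E k) :=
    eq_reflect_cfDenom hD hE (toNat_sub_add_degSeq_succ hbneg hmono) (by rw [hr0, hD0, pow_zero])
      (by rw [hr1, hD1, pow_one]) hrrec
  have hdeg k : (r k).natDegree ≤ D k := hr k ▸ natDegree_reflect_cfDenom_le hD hE k
  have hlead k : (r k).coeff (D k) = 1 := hr k ▸ coeff_reflect_cfDenom_self hE0 D k
  have horth k s (hs : s + 1 < D (k + 1)) :
      hankelPairing (fun n => PowerSeries.coeff n f) s (r k) = 0 :=
    hr k ▸ hankelPairing_reflect_cfDenom_eq_zero hF0 hF hD hD0 hD1 hE hs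
  have hp' m : p m = det (borderedHankelMatrix (fun n => PowerSeries.coeff n f) m) := by
    cases m with
    | zero => simp [hp0, borderedHankelMatrix]
    | succ m => exact hp m
  refine ⟨fun n k hk hlt => ?_, fun n m hm₁ hm₂ => ?_⟩
  · have hDk : (B n + 1).toNat = D k := by rw [← hk]; rfl
    have : D k < D (k + 1) := degSeq_lt_succ hbneg hmono (hk.trans_lt hlt)
    rw [hDk, hp']
    exact det_borderedHankelMatrix_of_orthogonal (hdeg k) (hlead k) fun s hs => horth k s (by omega)
  · obtain ⟨k, hk, hk'⟩ : ∃ k, (D k : ℤ) = B n + 1 ∧ B (n + 1) + 1 ≤ D (k + 1) :=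
      exists_degSeq_eq_and_le hbneg hmono hgap hBmono hBrange n
    rw [hp']
    refine det_borderedHankelMatrix_eq_zero (q := r k) (fun h0 => by simpa [h0] using hlead k)
      (by have := hdeg k; omega) fun s hs => horth k s (by omega)

/-- Theorem 3.2: let `f` be given by a C-fraction with nonzero coefficients `a_k` and
exponents `b_{k+1} − b_{k−1}`, let `r_k` be the associated polynomials, let `p_n` be the
bordered Hankel determinant polynomial, and let `(B_n)` enumerate the distinct values of
`{b_k : k ≥ −1}` in increasing order. Then (i) if `k` is the largest index with
`b_{k−1} = B_n` (equivalently `b_{k−1} = B_n < b_k`), then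
`p_{B_n+1}(x) = d(B_n) · r_k(x)`, and (ii) `p_m = 0` for `B_n + 1 < m < B_{n+1} − 1`. -/
theorem bordered_hankel_polynomials {K : Type*} [Field K] (a : ℕ → K)
    (ha : ∀ k : ℕ, a k ≠ 0) (b : ℤ → ℤ)
    (hbneg : b (-1) = -1) (hb0 : b 0 = 0)
    (hmono : ∀ k : ℤ, -1 ≤ k → b k ≤ b (k + 1))
    (hgap : ∀ k : ℤ, -1 ≤ k → 1 ≤ b (k + 2) - b k)
    (f : PowerSeries K) (F : ℕ → PowerSeries K) (hF0 : F 0 = f)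
    (hF : ∀ k : ℕ, F k * (1 - PowerSeries.C (a k) *
      PowerSeries.X ^ (b ((k : ℤ) + 1) - b ((k : ℤ) - 1)).toNat * F (k + 1)) = 1)
    (r : ℕ → Polynomial K)
    (hr0 : r 0 = 1) (hr1 : r 1 = Polynomial.X)
    (hrrec : ∀ k : ℕ, r (k + 2) =
      Polynomial.X ^ (b ((k : ℤ) + 1) - b (k : ℤ)).toNat * r (k + 1) -
        Polynomial.C (a k) * r k)
    (p : ℕ → Polynomial K) (hp0 : p 0 = 1)
    (hp : ∀ n : ℕ, p (n + 1) =
      Matrix.det (Matrix.of fun i j : Fin (n + 2) =>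
        if (j : ℕ) = n + 1 then Polynomial.X ^ (i : ℕ)
        else Polynomial.C (PowerSeries.coeff ((i : ℕ) + (j : ℕ)) f)))
    (B : ℕ → ℤ) (hBmono : StrictMono B)
    (hBrange : Set.range B = {v : ℤ | ∃ k : ℤ, -1 ≤ k ∧ b k = v}) :
    (∀ n k : ℕ, b ((k : ℤ) - 1) = B n → B n < b (k : ℤ) →
      p ((B n + 1).toNat) =
        Polynomial.C (Matrix.det (Matrix.of fun i j : Fin ((B n + 1).toNat) =>
          PowerSeries.coeff ((i : ℕ) + (j : ℕ)) f)) * r k) ∧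
    (∀ n m : ℕ, B n + 1 < (m : ℤ) → (m : ℤ) < B (n + 1) - 1 → p m = 0) :=
  bordered_hankel_polynomials_general a b hbneg hb0 hmono hgap f F hF0 hF r hr0 hr1 hrrec p hp0 hp B
    hBmono hBrange
end

section
/- Let K be a field, (a_k)_{k≥0} a sequence in K, and m ≥ 1 an integer. For each m define polynomials P^{(m)}_k(x) over K by P^{(m)}_0 = 1, P^{(m)}_1 = x, P^{(m)}_{2k}(x) = x^{m−1} P^{(m)}_{2k−1}(x) − a_{2k−2} P^{(m)}_{2k−2}(x) and P^{(m)}_{2k+1}(x) = x P^{(m)}_{2k}(x) − a_{2k−1} P^{(m)}_{2k−1}(x) for k ≥ 1. Write P^{(2)}_{2k}(x) = ∑_{j=0}^{k} u_{k,j} x^{2j} and P^{(2)}_{2k−1}(x) = x ∑_{j=0}^{k−1} v_{k,j} x^{2j}. Then for every m ≥ 1 and k, P^{(m)}_{2k}(x) = ∑_{j=0}^{k} u_{k,j} x^{mj} and P^{(m)}_{2k−1}(x) = x ∑_{j=0}^{k−1} v_{k,j} x^{mj}. -/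
/-!
Put `y = x^m`. Read the even-index polynomials as polynomials `U_k` in `y` and the odd-index
ones as `x V_k` with `V_k` a polynomial in `y`. Since `x^{m-1} · x = y` for `m ≥ 1`, the
recurrences become `U_{k+1} = y V_k - a_{2k} U_k` and `V_{k+1} = U_{k+1} - a_{2k+1} V_k`, which
do not involve `m`. Hence `P^{(m)}_{2k} = U_k(x^m)` and `P^{(m)}_{2k+1} = x V_k(x^m)` with
`U_k, V_k` of degree `≤ k` independent of `m`, and the case `m = 2` shows that the coefficients
of `U_k, V_k` are the `u_{k,j}, v_{k,j}`.
-/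

open Polynomial

namespace Polynomial

variable {R : Type*} [CommRing R]

theorem expand_eq_sum_range {p : R[X]} {k : ℕ} (hp : p.natDegree ≤ k) (m : ℕ) :
    expand R m p = ∑ j ∈ Finset.range (k + 1), C (p.coeff j) * X ^ (m * j) := by
  conv_lhs => rw [as_sum_range_C_mul_X_pow' p (Nat.lt_succ_of_le hp)]
  simp [map_sum, pow_mul]

theorem coeff_X_mul_expand_two (p : R[X]) (j : ℕ) :
    (X * expand R 2 p).coeff (2 * j + 1) = p.coeff j := by
  rw [coeff_X_mul, coeff_expand_mul' two_pos]

end Polynomial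

namespace CFrac

variable {R : Type*} [CommRing R]

noncomputable def reducedPair (a : ℕ → R) : ℕ → R[X] × R[X]
  | 0 => (1, 1)
  | k + 1 =>
    let u := X * (reducedPair a k).2 - C (a (2 * k)) * (reducedPair a k).1
    (u, u - C (a (2 * k + 1)) * (reducedPair a k).2)

theorem natDegree_reducedPair_le (a : ℕ → R) (k : ℕ) :
    (reducedPair a k).1.natDegree ≤ k ∧ (reducedPair a k).2.natDegree ≤ k := by
  induction k with
  | zero => simp [reducedPair]
  | succ k ih =>
    have hu : (X * (reducedPair a k).2 - C (a (2 * k)) * (reducedPair a k).1).natDegree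
        ≤ k + 1 :=
      (natDegree_sub_le _ _).trans <| max_le
        (natDegree_mul_le.trans (by linarith [natDegree_X_le (R := R), ih.2]))
        ((natDegree_C_mul_le _ _).trans (by linarith [ih.1]))
    exact ⟨hu, (natDegree_sub_le _ _).trans <|
      max_le hu ((natDegree_C_mul_le _ _).trans (by linarith [ih.2]))⟩

theorem eq_expand_reducedPair (a : ℕ → R) (P : ℕ → ℕ → R[X])
    (hP0 : ∀ m, P m 0 = 1) (hP1 : ∀ m, P m 1 = X)
    (hPeven : ∀ m k,
      P m (2 * k + 2) = X ^ (m - 1) * P m (2 * k + 1) - C (a (2 * k)) * P m (2 * k))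
    (hPodd : ∀ m k,
      P m (2 * k + 3) = X * P m (2 * k + 2) - C (a (2 * k + 1)) * P m (2 * k + 1))
    {m : ℕ} (hm : 1 ≤ m) (k : ℕ) :
    P m (2 * k) = expand R m (reducedPair a k).1 ∧
      P m (2 * k + 1) = X * expand R m (reducedPair a k).2 := by
  induction k with
  | zero => simp [reducedPair, hP0, hP1]
  | succ k ih =>
    have hXm : (X : R[X]) ^ (m - 1) * X = X ^ m := by rw [← pow_succ, Nat.sub_add_cancel hm]
    have heven : P m (2 * k + 2) = expand R m (reducedPair a (k + 1)).1 := by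
      rw [hPeven, ih.1, ih.2, ← mul_assoc, hXm]
      simp [reducedPair]
    refine ⟨heven, ?_⟩
    rw [show 2 * (k + 1) + 1 = 2 * k + 3 by ring, hPodd, heven, ih.2]
    simp only [reducedPair, map_sub, map_mul, expand_C]
    ring

end CFrac

open CFrac in
/-- Proposition 3.1: the polynomials `P^{(m)}_k` associated to the C-fraction with all
exponents `m` are obtained from the `m = 2` case by replacing `x^{2j}` with `x^{mj}`
(even index) resp. `x^{1+2j}` with `x^{1+mj}` (odd index). -/
theorem cFrac_polynomials_exponent_substitution {K : Type*} [Field K] (a : ℕ → K)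
    (P : ℕ → ℕ → Polynomial K)
    (hP0 : ∀ m : ℕ, P m 0 = 1) (hP1 : ∀ m : ℕ, P m 1 = Polynomial.X)
    (hPeven : ∀ m k : ℕ, P m (2 * k + 2) =
      Polynomial.X ^ (m - 1) * P m (2 * k + 1) - Polynomial.C (a (2 * k)) * P m (2 * k))
    (hPodd : ∀ m k : ℕ, P m (2 * k + 3) =
      Polynomial.X * P m (2 * k + 2) - Polynomial.C (a (2 * k + 1)) * P m (2 * k + 1)) :
    ∀ m : ℕ, 1 ≤ m → ∀ k : ℕ,
      P m (2 * k) = ∑ j ∈ Finset.range (k + 1),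
        Polynomial.C ((P 2 (2 * k)).coeff (2 * j)) * Polynomial.X ^ (m * j) ∧
      P m (2 * k + 1) = Polynomial.X * ∑ j ∈ Finset.range (k + 1),
        Polynomial.C ((P 2 (2 * k + 1)).coeff (2 * j + 1)) * Polynomial.X ^ (m * j) := by
  intro m hm k
  obtain ⟨hUm, hVm⟩ := eq_expand_reducedPair a P hP0 hP1 hPeven hPodd hm k
  obtain ⟨hU2, hV2⟩ := eq_expand_reducedPair a P hP0 hP1 hPeven hPodd one_le_two k
  obtain ⟨hdegU, hdegV⟩ := natDegree_reducedPair_le a k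
  simp only [hU2, hV2, coeff_expand_mul' two_pos, coeff_X_mul_expand_two]
  exact ⟨hUm.trans (expand_eq_sum_range hdegU m),
    hVm.trans (congrArg _ (expand_eq_sum_range hdegV m))⟩
end

section
/- Let C_n = \binom{2n}{n}/(n+1) denote the Catalan numbers. Then for all integers k ≥ 0 and 0 ≤ n ≤ k: (i) ∑_{j=0}^{k} (−1)^j \binom{2k−j}{j} C_{k+n−j} equals 0 if n < k and equals 1 if n = k; and (ii) ∑_{j=0}^{k} (−1)^j \binom{2k+1−j}{j} C_{k+n+1−j} equals 0 if n < k and equals 1 if n = k. -/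
/-!
Write `Λ` for the functional with `Λ(x^(2n)) = C_n`, `Λ(x^(2n+1)) = 0`. Both sums are values of
`Λ(Fib_(m+1)(x) · x^a)` with `m + a` even, and the Fibonacci recurrence
`Fib_(m+3) = x Fib_(m+2) - Fib_(m+1)` turns into a recurrence for these values which is also
satisfied, through Pascal's rule, by the ballot numbers `C(a, N) - C(a, N + 1)`, `2N = m + a`.
The two agree for `m = 0, 1` by the formula `C_N = C(2N, N) - C(2N, N + 1)`, hence for all `m`.
For `m = 2k` or `2k + 1` and `n ≤ k` we have `a ≤ N`, where the ballot number is `[a = N]`.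
-/

open Finset

theorem catalan_add_choose_eq_centralBinom (n : ℕ) :
    catalan n + (2 * n).choose (n + 1) = n.centralBinom := by
  refine Nat.eq_of_mul_eq_mul_left (show 0 < n + 1 by omega) ?_
  have h := Nat.choose_succ_right_eq (2 * n) n
  rw [show 2 * n - n = n by omega] at h
  rw [mul_add, succ_mul_catalan_eq_centralBinom, mul_comm, h, Nat.centralBinom_eq_two_mul_choose]
  ring

theorem catalan_eq_choose_sub_choose (n : ℕ) :
    (catalan n : ℤ) = (2 * n).choose n - (2 * n).choose (n + 1) := by
  rw [eq_sub_iff_add_eq, ← Nat.centralBinom_eq_two_mul_choose]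
  exact_mod_cast catalan_add_choose_eq_centralBinom n

theorem catalan_succ_eq_choose_sub_choose (n : ℕ) :
    (catalan (n + 1) : ℤ) = (2 * n + 1).choose (n + 1) - (2 * n + 1).choose (n + 2) := by
  rw [catalan_eq_choose_sub_choose, show 2 * (n + 1) = 2 * n + 1 + 1 by ring,
    Nat.choose_succ_succ' _ n, Nat.choose_succ_succ' _ (n + 1), Nat.choose_symm_half]
  push_cast
  ring

/-- `Λ(Fib_(m+1)(x) · x^(2N-m))`, using `Fib_(m+1)(x) = ∑_{i+j=m} (-1)^j C(i, j) x^(i-j)`. -/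
def fibCatalan (m N : ℕ) : ℤ :=
  ∑ p ∈ antidiagonal m, (-1) ^ p.1 * (p.2.choose p.1 : ℤ) * catalan (N - p.1)

theorem fibCatalan_zero (N : ℕ) : fibCatalan 0 N = catalan N := by
  simp [fibCatalan]

theorem fibCatalan_one (N : ℕ) : fibCatalan 1 N = catalan N := by
  simp [fibCatalan, Nat.sum_antidiagonal_succ]

theorem fibCatalan_add_two (m N : ℕ) :
    fibCatalan (m + 2) (N + 1) = fibCatalan (m + 1) (N + 1) - fibCatalan m N := by
  rw [fibCatalan, fibCatalan, fibCatalan, Nat.sum_antidiagonal_succ, Nat.sum_antidiagonal_succ',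
    Nat.sum_antidiagonal_succ]
  simp only [Nat.choose_succ_succ', Nat.choose_zero_succ, Nat.choose_zero_right,
    Nat.add_sub_add_right, Nat.sub_zero, Nat.cast_add, Nat.cast_zero, Nat.cast_one, pow_succ,
    pow_zero, mul_add, add_mul, mul_neg, neg_mul, mul_one, sum_add_distrib, sum_neg_distrib,
    mul_zero, zero_mul, zero_add]
  ring

theorem fibCatalan_eq_choose_sub_choose {m a N : ℕ} (h : m + a = 2 * N) :
    fibCatalan m N = a.choose N - a.choose (N + 1) := by
  induction m using Nat.twoStepInduction generalizing a N with
  | zero =>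
    rw [fibCatalan_zero, catalan_eq_choose_sub_choose, ← h, zero_add]
  | one =>
    obtain ⟨N, rfl⟩ : ∃ N', N = N' + 1 := ⟨N - 1, by omega⟩
    rw [fibCatalan_one, catalan_succ_eq_choose_sub_choose, show a = 2 * N + 1 by omega]
  | more m ih₀ ih₁ =>
    obtain ⟨N, rfl⟩ : ∃ N', N = N' + 1 := ⟨N - 1, by omega⟩
    rw [fibCatalan_add_two, ih₁ (a := a + 1) (by omega), ih₀ (a := a) (by omega),
      Nat.choose_succ_succ', Nat.choose_succ_succ']
    push_cast
    ring

theorem fibCatalan_eq_sum_range (m N k : ℕ) (h : m ≤ 2 * k + 1) :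
    fibCatalan m N = ∑ j ∈ range (k + 1), (-1 : ℤ) ^ j * ((m - j).choose j : ℤ) *
      catalan (N - j) := by
  set u : ℕ → ℤ := fun j ↦ (-1) ^ j * ((m - j).choose j : ℤ) * catalan (N - j)
  have hu : ∀ j, m - j < j → u j = 0 := fun j hj ↦ by simp [u, Nat.choose_eq_zero_of_lt hj]
  rw [fibCatalan, Nat.sum_antidiagonal_eq_sum_range_succ_mk,
    ← eventually_constant_sum (fun j hj ↦ hu j (by omega)) (show m + 1 ≤ m + k + 2 by omega),
    eventually_constant_sum (fun j hj ↦ hu j (by omega)) (show k + 1 ≤ m + k + 2 by omega)]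

theorem choose_sub_choose_succ_of_le {a N : ℕ} (h : a ≤ N) :
    (a.choose N : ℤ) - a.choose (N + 1) = if a = N then 1 else 0 := by
  rcases h.eq_or_lt with rfl | hlt
  · simp
  · simp [Nat.choose_eq_zero_of_lt hlt, Nat.choose_eq_zero_of_lt (hlt.trans N.lt_succ_self),
      hlt.ne]

/-- Orthogonality relations for Catalan numbers and Fibonacci polynomials:
`Σ_{j=0}^k (−1)^j C(2k−j, j) Cat_{k+n−j} = [n = k]` and
`Σ_{j=0}^k (−1)^j C(2k+1−j, j) Cat_{k+n+1−j} = [n = k]` for `0 ≤ n ≤ k`. -/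
theorem catalan_fibonacci_orthogonality : ∀ k n : ℕ, n ≤ k →
    ((∑ j ∈ Finset.range (k + 1),
        (-1 : ℤ) ^ j * Nat.choose (2 * k - j) j * catalan (k + n - j)) =
      if n = k then 1 else 0) ∧
    ((∑ j ∈ Finset.range (k + 1),
        (-1 : ℤ) ^ j * Nat.choose (2 * k + 1 - j) j * catalan (k + n + 1 - j)) =
      if n = k then 1 else 0) := by
  intro k n hnk
  rw [← fibCatalan_eq_sum_range (2 * k) (k + n) k (by omega),
    ← fibCatalan_eq_sum_range (2 * k + 1) (k + n + 1) k le_rfl,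
    fibCatalan_eq_choose_sub_choose (a := 2 * n) (by omega),
    fibCatalan_eq_choose_sub_choose (a := 2 * n + 1) (by omega),
    choose_sub_choose_succ_of_le (by omega), choose_sub_choose_succ_of_le (by omega)]
  simp only [show 2 * n = k + n ↔ n = k by omega, show 2 * n + 1 = k + n + 1 ↔ n = k by omega,
    and_self]
end

section
/- In the polynomial ring ℤ[q], for every n ≥ 0 the Hankel determinant of the sequence f_k = q^{\binom{k+1}{2}} satisfies det(q^{\binom{i+j+1}{2}})_{i,j=0}^{n} = q^{n(n+1)²/2} · ∏_{j=1}^{n} (q^j − 1)^{n+1−j}. -/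
/-!
Since `C(i+j+1, 2) = C(i+1, 2) + C(j+1, 2) + i j`, the matrix `(x ^ C(i+j+1, 2))` is the Vandermonde
matrix of the nodes `1, x, …, x^n` with row `i` and column `j` scaled by `x ^ C(i+1, 2)` and
`x ^ C(j+1, 2)`. In the Vandermonde product, `x^j - x^i = x^i (x^(j-i) - 1)`, and the difference
`d = j - i` occurs for `n + 1 - d` pairs `i < j`. The powers of `x` collected from index `i` add up
to `2 C(i+1, 2) + i (n - i) = i (n + 1)`.
-/

open Finset Matrix

theorem Nat.choose_two_add (a b : ℕ) : (a + b).choose 2 = a.choose 2 + b.choose 2 + a * b := by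
  induction b with
  | zero => simp
  | succ b ih =>
    rw [← add_assoc, Nat.choose_succ_succ', ih, Nat.choose_succ_succ' b, Nat.choose_one_right,
      Nat.choose_one_right]
    ring

theorem pow_choose_two_add_add_one {M : Type*} [CommMonoid M] (x : M) (a b : ℕ) :
    x ^ (a + b + 1).choose 2 = x ^ (a + 1).choose 2 * (x ^ (b + 1).choose 2 * (x ^ a) ^ b) := by
  rw [add_right_comm, Nat.choose_two_add, Nat.choose_two_add b 1, ← pow_mul, ← pow_add, ← pow_add]
  congr 1
  simp only [Nat.choose_two_add a 1, Nat.choose_succ_self]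
  ring

theorem Fin.prod_Ioi_apply_sub_eq_prod_Icc {M : Type*} [CommMonoid M] (f : ℕ → M) {n : ℕ}
    (i : Fin (n + 1)) :
    ∏ j ∈ Ioi i, f (j - i) = ∏ d ∈ Icc 1 (n - i), f d := by
  trans ∏ j ∈ Ioo (i : ℕ) (n + 1), f (j - i)
  · rw [← Fin.map_valEmbedding_Ioi, prod_map]
    rfl
  refine prod_nbij' (· - i) (i + ·) ?_ ?_ ?_ ?_ fun _ _ => rfl <;>
    simp only [mem_Ioo, mem_Icc] <;> omega

theorem prod_range_prod_Icc_sub {M : Type*} [CommMonoid M] (g : ℕ → M) (n : ℕ) :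
    ∏ i ∈ range (n + 1), ∏ d ∈ Icc 1 (n - i), g d = ∏ d ∈ Icc 1 n, g d ^ (n + 1 - d) := by
  rw [prod_comm' (t' := Icc 1 n) (s' := fun d => range (n + 1 - d))
    (fun i d => by simp only [mem_range, mem_Icc]; omega)]
  exact prod_congr rfl fun d _ => by rw [prod_const, card_range]

theorem sum_choose_two_mul_two_add (n : ℕ) :
    (∑ i ∈ range (n + 1), (i + 1).choose 2) * 2 + ∑ i ∈ range (n + 1), i * (n - i) =
      n * (n + 1) ^ 2 / 2 := by
  have hterm : ∀ i ∈ range (n + 1), (i + 1).choose 2 * 2 + i * (n - i) = i * (n + 1) := by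
    intro i hi
    obtain ⟨k, rfl⟩ : ∃ k, n = i + k :=
      Nat.exists_eq_add_of_le (Nat.lt_succ_iff.mp (mem_range.mp hi))
    rw [← Nat.add_one_mul_choose_eq, Nat.choose_one_right, Nat.add_sub_cancel_left]
    ring
  rw [sum_mul, ← sum_add_distrib, sum_congr rfl hterm, ← sum_mul]
  have hgauss := sum_range_id_mul_two (n + 1)
  symm
  apply Nat.div_eq_of_eq_mul_left two_pos
  rw [Nat.add_sub_cancel] at hgauss
  calc n * (n + 1) ^ 2 = (n + 1) * n * (n + 1) := by ring
    _ = _ := by rw [← hgauss]; ring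

theorem det_vandermonde_pow {R : Type*} [CommRing R] (x : R) (n : ℕ) :
    (vandermonde fun i : Fin (n + 1) => x ^ (i : ℕ)).det =
      x ^ (∑ i ∈ range (n + 1), i * (n - i)) * ∏ d ∈ Icc 1 n, (x ^ d - 1) ^ (n + 1 - d) := by
  have hrow (i : Fin (n + 1)) : ∏ j ∈ Ioi i, (x ^ (j : ℕ) - x ^ (i : ℕ)) =
      x ^ ((i : ℕ) * (n - i)) * ∏ d ∈ Icc 1 (n - i), (x ^ d - 1) := by
    calc ∏ j ∈ Ioi i, (x ^ (j : ℕ) - x ^ (i : ℕ))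
        = ∏ j ∈ Ioi i, x ^ (i : ℕ) * (x ^ ((j : ℕ) - i) - 1) :=
          prod_congr rfl fun j hj => by
            rw [mul_sub, mul_one, ← pow_add, Nat.add_sub_cancel' (mem_Ioi.mp hj).le]
      _ = _ := by
          rw [prod_mul_distrib, prod_const, Fin.card_Ioi, Nat.add_sub_cancel, ← pow_mul,
            Fin.prod_Ioi_apply_sub_eq_prod_Icc (fun d => x ^ d - 1)]
  rw [det_vandermonde, prod_congr rfl fun i _ => hrow i, prod_mul_distrib, prod_pow_eq_pow_sum,
    Fin.sum_univ_eq_sum_range (fun i => i * (n - i)),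
    Fin.prod_univ_eq_prod_range (fun i => ∏ d ∈ Icc 1 (n - i), (x ^ d - 1)),
    prod_range_prod_Icc_sub]

theorem det_hankel_pow_choose_two {R : Type*} [CommRing R] (x : R) (n : ℕ) :
    (of fun i j : Fin (n + 1) => x ^ ((i : ℕ) + j + 1).choose 2).det =
      x ^ (n * (n + 1) ^ 2 / 2) * ∏ j ∈ Icc 1 n, (x ^ j - 1) ^ (n + 1 - j) := by
  have hfactor : (of fun i j : Fin (n + 1) => x ^ ((i : ℕ) + j + 1).choose 2) =
      of fun i j : Fin (n + 1) => x ^ ((i : ℕ) + 1).choose 2 * of (fun i j : Fin (n + 1) =>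
        x ^ ((j : ℕ) + 1).choose 2 * vandermonde (fun k : Fin (n + 1) => x ^ (k : ℕ)) i j) i j := by
    ext i j
    simp only [of_apply, vandermonde_apply, pow_choose_two_add_add_one]
  rw [hfactor, det_mul_column, det_mul_row, det_vandermonde_pow, prod_pow_eq_pow_sum,
    Fin.sum_univ_eq_sum_range (fun i => (i + 1).choose 2), ← mul_assoc, ← mul_assoc, ← pow_add,
    ← pow_add, ← mul_two, sum_choose_two_mul_two_add]

/-- Hankel determinant of Eisenstein's sequence `q^{C(k+1,2)}` in `ℤ[q]`:
`det(q^{C(i+j+1,2)})_{i,j=0}^n = q^{n(n+1)²/2} ∏_{j=1}^n (q^j − 1)^{n+1−j}`. -/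
theorem hankel_det_eisenstein : ∀ n : ℕ,
    Matrix.det (Matrix.of fun i j : Fin (n + 1) =>
        (Polynomial.X : Polynomial ℤ) ^ Nat.choose ((i : ℕ) + (j : ℕ) + 1) 2) =
      Polynomial.X ^ (n * (n + 1) ^ 2 / 2) *
        ∏ j ∈ Finset.Icc 1 n,
          ((Polynomial.X : Polynomial ℤ) ^ j - 1) ^ (n + 1 - j) :=
  det_hankel_pow_choose_two Polynomial.X
end
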